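/- arXiv:1206.3376 — 4 statements merged into one kernel-verified Lean document; each statement's English description precedes it below -/
import Mathlib

section
/- Let R > 0 and let B be a compact topological space. Let φ : ℝ × B → ℂ be such that for every b ∈ B the function t ↦ φ(t,b) is infinitely differentiable, for every k ∈ ℕ the function (t,b) ↦ (d/dt)^k φ(t,b) is continuous on ℝ × B, and φ(t,b) = 0 whenever |t| > R. Define F(z,b) = ∫_ℝ φ(t,b) e^{-z t} dt for z ∈ ℂ, b ∈ B. Then F is continuous on ℂ × B, for each fixed b ∈ B the function z ↦ F(z,b) is entire, and for every N ∈ ℕ one has sup_{z ∈ ℂ, b ∈ B} e^{-R|Re z|} (1+|z|)^N |F(z,b)| < ∞. -/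
/-!
Because `φ(·, b)` vanishes outside `[-R, R]`, `F(z, b)` is an integral over a fixed compact
interval of a function that is jointly continuous in `(t, z, b)` and holomorphic in `z`; this gives
continuity and holomorphy. Integrating by parts `k` times gives
`z ^ k F(z, b) = ∫ ∂ₜᵏ φ(t, b) e^{-zt} dt`, and `|e^{-zt}| ≤ e^{R |Re z|}` for `|t| ≤ R`, so
`e^{-R |Re z|} |z| ^ k |F(z, b)| ≤ 2R sup |∂ₜᵏ φ|`, which is finite since `∂ₜᵏ φ` is continuous
with compact support in `ℝ × B`.
-/

open MeasureTheory Complex Set Filter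
open scoped ContDiff

theorem hasDerivAt_intervalIntegral_of_continuous {𝕜 E : Type*} [RCLike 𝕜] [NormedAddCommGroup E]
    [NormedSpace ℝ E] [NormedSpace 𝕜 E] {μ : Measure ℝ} [IsLocallyFiniteMeasure μ]
    {F F' : 𝕜 → ℝ → E} (hF : Continuous F.uncurry) (hF' : Continuous F'.uncurry)
    (hderiv : ∀ x t, HasDerivAt (F · t) (F' x t) x) (a b : ℝ) (x₀ : 𝕜) :
    HasDerivAt (fun x => ∫ t in a..b, F x t ∂μ) (∫ t in a..b, F' x₀ t ∂μ) x₀ := by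
  obtain ⟨C, hC⟩ := ((isCompact_closedBall x₀ 1).prod isCompact_uIcc).exists_bound_of_continuousOn
    hF'.continuousOn
  refine (intervalIntegral.hasDerivAt_integral_of_dominated_loc_of_deriv_le (bound := fun _ => C)
    (Metric.closedBall_mem_nhds x₀ one_pos) (Eventually.of_forall fun x => ?_)
    ((hF.uncurry_left x₀).intervalIntegrable a b) (hF'.uncurry_left x₀).aestronglyMeasurable
    (ae_of_all _ fun t ht x hx => hC (x, t) ⟨hx, uIoc_subset_uIcc ht⟩) intervalIntegrable_const
    (ae_of_all _ fun t _ x _ => hderiv x t)).2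
  exact (hF.uncurry_left x).aestronglyMeasurable

theorem tsupport_iteratedDeriv_subset {𝕜 F : Type*} [NontriviallyNormedField 𝕜]
    [NormedAddCommGroup F] [NormedSpace 𝕜 F] (f : 𝕜 → F) (n : ℕ) :
    tsupport (iteratedDeriv n f) ⊆ tsupport f := by
  induction n with
  | zero => rw [iteratedDeriv_zero]
  | succ n ih => exact (iteratedDeriv_succ (f := f) ▸ tsupport_deriv_subset).trans ih

theorem support_iteratedDeriv_subset {𝕜 F : Type*} [NontriviallyNormedField 𝕜]
    [NormedAddCommGroup F] [NormedSpace 𝕜 F] {f : 𝕜 → F} {s : Set 𝕜} (hs : IsClosed s)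
    (hf : f.support ⊆ s) (n : ℕ) : (iteratedDeriv n f).support ⊆ s :=
  (subset_tsupport _).trans ((tsupport_iteratedDeriv_subset f n).trans (closure_minimal hf hs))

noncomputable def fourierLaplace (g : ℝ → ℂ) (z : ℂ) : ℂ :=
  ∫ t : ℝ, g t * cexp (-(z * t))

lemma fourierLaplace_eq_intervalIntegral {g : ℝ → ℂ} {a b : ℝ} (hg : g.support ⊆ Ioc a b)
    (z : ℂ) : fourierLaplace g z = ∫ t in a..b, g t * cexp (-(z * t)) :=
  (intervalIntegral.integral_eq_integral_of_support_subset
    ((Function.support_mul_subset_left _ _).trans hg)).symm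

lemma continuous_fourierLaplace_uncurry {X : Type*} [TopologicalSpace X] {g : X → ℝ → ℂ}
    (hg : Continuous g.uncurry) {a b : ℝ} (hsupp : ∀ x, (g x).support ⊆ Ioc a b) :
    Continuous fun p : ℂ × X => fourierLaplace (g p.2) p.1 := by
  simp only [fourierLaplace_eq_intervalIntegral (hsupp _)]
  apply intervalIntegral.continuous_parametric_intervalIntegral_of_continuous'
  fun_prop

lemma differentiable_fourierLaplace {g : ℝ → ℂ} (hg : Continuous g) {a b : ℝ}
    (hsupp : g.support ⊆ Ioc a b) : Differentiable ℂ (fourierLaplace g) := by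
  intro z₀
  simp only [funext (fourierLaplace_eq_intervalIntegral hsupp)]
  refine (hasDerivAt_intervalIntegral_of_continuous
    (F' := fun z t => g t * (-t * cexp (-(z * t)))) (by fun_prop) (by fun_prop)
    (fun z t => ?_) a b z₀).differentiableAt
  exact (((hasDerivAt_mul_const (t : ℂ)).neg.cexp).const_mul (g t)).congr_deriv
    (by simp only [Pi.neg_apply]; ring)

lemma integrable_mul_cexp {g : ℝ → ℂ} (hg : Continuous g) (hcs : HasCompactSupport g) (z : ℂ) :
    Integrable fun t : ℝ => g t * cexp (-(z * t)) :=
  (hg.mul (by fun_prop)).integrable_of_hasCompactSupport hcs.mul_right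

lemma fourierLaplace_deriv {g : ℝ → ℂ} (hg : ContDiff ℝ 1 g) (hcs : HasCompactSupport g)
    (z : ℂ) : fourierLaplace (deriv g) z = z * fourierLaplace g z := by
  have hexp : ∀ t : ℝ, HasDerivAt (fun t : ℝ => cexp (-(z * t))) (-z * cexp (-(z * t))) t := by
    intro t
    simpa [mul_comm] using (((hasDerivAt_id (t : ℂ)).const_mul z).neg.cexp).comp_ofReal
  have hibp := integral_mul_deriv_eq_deriv_mul_of_integrable
    (fun t _ => (hg.differentiable one_ne_zero t).hasDerivAt) (fun t _ => hexp t)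
    (((integrable_mul_cexp hg.continuous hcs z).const_mul (-z)).congr
      (ae_of_all _ fun t => by simp only [Pi.mul_apply]; ring))
    (integrable_mul_cexp (hg.continuous_deriv le_rfl) hcs.deriv z)
    (integrable_mul_cexp hg.continuous hcs z)
  simp only [mul_left_comm _ (-z), integral_const_mul] at hibp
  simp only [fourierLaplace]
  linear_combination hibp

lemma fourierLaplace_iteratedDeriv {g : ℝ → ℂ} (hg : ContDiff ℝ ∞ g) (hcs : HasCompactSupport g)
    (k : ℕ) (z : ℂ) : fourierLaplace (iteratedDeriv k g) z = z ^ k * fourierLaplace g z := by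
  induction k with
  | zero => simp
  | succ k ih =>
    have hk : ContDiff ℝ 1 (iteratedDeriv k g) :=
      iteratedDeriv_eq_iterate (f := g) ▸ (hg.iterate_deriv k).of_le (by exact_mod_cast le_top)
    rw [iteratedDeriv_succ, fourierLaplace_deriv hk
      (hcs.mono' ((subset_tsupport _).trans (tsupport_iteratedDeriv_subset g k))), ih]
    ring

lemma norm_cexp_neg_mul_le {z : ℂ} {t R : ℝ} (ht : |t| ≤ R) :
    ‖cexp (-(z * t))‖ ≤ Real.exp (R * |z.re|) := by
  rw [norm_exp, neg_re, re_mul_ofReal, Real.exp_le_exp]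
  calc -(z.re * t) ≤ |z.re * t| := neg_le_abs _
    _ = |t| * |z.re| := by rw [abs_mul, mul_comm]
    _ ≤ R * |z.re| := by gcongr

lemma norm_fourierLaplace_le {g : ℝ → ℂ} {R M : ℝ} (hR : 0 ≤ R) (hsupp : g.support ⊆ Icc (-R) R)
    (hM : ∀ t, ‖g t‖ ≤ M) (z : ℂ) :
    ‖fourierLaplace g z‖ ≤ 2 * R * M * Real.exp (R * |z.re|) := by
  rw [fourierLaplace, ← setIntegral_eq_integral_of_forall_compl_eq_zero fun t ht => by
    rw [Function.notMem_support.mp fun h => ht (hsupp h), zero_mul]]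
  calc ‖∫ t in Icc (-R) R, g t * cexp (-(z * t))‖
      ≤ M * Real.exp (R * |z.re|) * volume.real (Icc (-R) R) :=
        norm_setIntegral_le_of_norm_le_const measure_Icc_lt_top fun t ht => by
          rw [norm_mul]
          exact mul_le_mul (hM t) (norm_cexp_neg_mul_le (abs_le.mpr ht)) (norm_nonneg _)
            ((norm_nonneg _).trans (hM t))
    _ = 2 * R * M * Real.exp (R * |z.re|) := by
        rw [Real.volume_real_Icc_of_le (by linarith)]
        ring

lemma exp_mul_one_add_pow_mul_norm_fourierLaplace_le {g : ℝ → ℂ} {R M₀ M : ℝ} {N : ℕ}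
    (hR : 0 ≤ R) (hg : ContDiff ℝ ∞ g) (hsupp : g.support ⊆ Icc (-R) R)
    (hM₀ : ∀ t, ‖g t‖ ≤ M₀) (hM : ∀ t, ‖iteratedDeriv N g t‖ ≤ M) (z : ℂ) :
    Real.exp (-(R * |z.re|)) * (1 + ‖z‖) ^ N * ‖fourierLaplace g z‖
      ≤ 2 ^ (N - 1) * (2 * R * M₀ + 2 * R * M) := by
  have hcs : HasCompactSupport g :=
    isCompact_Icc.of_isClosed_subset isClosed_closure (closure_minimal hsupp isClosed_Icc)
  have h₀ := norm_fourierLaplace_le hR hsupp hM₀ z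
  have hN := norm_fourierLaplace_le hR (support_iteratedDeriv_subset isClosed_Icc hsupp N) hM z
  rw [fourierLaplace_iteratedDeriv hg hcs, norm_mul, norm_pow] at hN
  set E := Real.exp (R * |z.re|)
  have hE : 0 < E := Real.exp_pos _
  rw [Real.exp_neg]
  calc E⁻¹ * (1 + ‖z‖) ^ N * ‖fourierLaplace g z‖
      ≤ E⁻¹ * (2 ^ (N - 1) * (1 ^ N + ‖z‖ ^ N)) * ‖fourierLaplace g z‖ := by
        gcongr
        exact add_pow_le zero_le_one (norm_nonneg z) N
    _ = 2 ^ (N - 1) * (E⁻¹ * ‖fourierLaplace g z‖ + E⁻¹ * (‖z‖ ^ N * ‖fourierLaplace g z‖)) := by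
        ring
    _ ≤ 2 ^ (N - 1) * (2 * R * M₀ + 2 * R * M) := by
        gcongr 2 ^ (N - 1) * (?_ + ?_) <;> rw [inv_mul_le_iff₀ hE, mul_comm E] <;> assumption

/-- **Paley–Wiener theorem on ℝ × B, forward direction** (Theorem 2.1.8 of the paper).
If `φ : ℝ × B → ℂ` is smooth in the first variable with all `t`-derivatives jointly
continuous, and is supported in `{|t| ≤ R} × B`, then its Fourier transform in the first
variable, `F (z, b) = ∫ φ (t, b) e^{-zt} dt`, is continuous on `ℂ × B`, entire in `z`
for each fixed `b`, and of uniform exponential type `R` with rapid decay. -/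
theorem stmt_0 {B : Type*} [TopologicalSpace B] [CompactSpace B]
    (R : ℝ) (hR : 0 < R) (φ : ℝ × B → ℂ)
    (hsmooth : ∀ b : B, ContDiff ℝ (⊤ : ℕ∞) fun t : ℝ => φ (t, b))
    (hcont : ∀ k : ℕ,
      Continuous fun p : ℝ × B => iteratedDeriv k (fun t : ℝ => φ (t, p.2)) p.1)
    (hsupp : ∀ (t : ℝ) (b : B), R < |t| → φ (t, b) = 0)
    (F : ℂ × B → ℂ)
    (hF : ∀ (z : ℂ) (b : B),
      F (z, b) = ∫ t : ℝ, φ (t, b) * Complex.exp (-(z * (t : ℂ)))) :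
    Continuous F ∧
    (∀ b : B, Differentiable ℂ fun z : ℂ => F (z, b)) ∧
    ∀ N : ℕ, ∃ C : ℝ, ∀ (z : ℂ) (b : B),
      Real.exp (-(R * |z.re|)) * (1 + ‖z‖) ^ N * ‖F (z, b)‖ ≤ C := by
  obtain rfl : F = fun p => fourierLaplace (fun t => φ (t, p.2)) p.1 := funext fun p => hF p.1 p.2
  have hφ : Continuous φ := by simpa using hcont 0
  have hsuppIcc (b : B) : (fun t => φ (t, b)).support ⊆ Icc (-R) R :=
    fun t ht => abs_le.mp (not_lt.mp (mt (hsupp t b) ht))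
  have hsuppIoc (b : B) : (fun t => φ (t, b)).support ⊆ Ioc (-R - 1) R :=
    (hsuppIcc b).trans (Icc_subset_Ioc_left (by linarith))
  have hbound (k : ℕ) : ∃ M, ∀ p : ℝ × B, ‖iteratedDeriv k (fun t => φ (t, p.2)) p.1‖ ≤ M :=
    (hcont k).bounded_above_of_compact_support <| .intro' (isCompact_Icc.prod isCompact_univ)
      (isClosed_Icc.prod isClosed_univ) fun p hp => Function.notMem_support.mp fun h =>
        hp ⟨support_iteratedDeriv_subset isClosed_Icc (hsuppIcc p.2) k h, mem_univ _⟩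
  choose M hM using hbound
  refine ⟨continuous_fourierLaplace_uncurry (g := fun b t => φ (t, b)) (by fun_prop) hsuppIoc,
    fun b => differentiable_fourierLaplace (by fun_prop) (hsuppIoc b), fun N => ?_⟩
  refine ⟨2 ^ (N - 1) * (2 * R * M 0 + 2 * R * M N), fun z b => ?_⟩
  exact exp_mul_one_add_pow_mul_norm_fourierLaplace_le hR.le (hsmooth b) (hsuppIcc b)
    (fun t => by simpa using hM 0 (t, b)) (fun t => hM N (t, b)) z
end

section
/- Let a > 0 and let f ∈ 𝓢_a(ℝ), i.e. f : ℝ → ℂ is smooth with sup_{t ∈ ℝ} (1+|t|)^N cosh(a t) |f^{(k)}(t)| < ∞ for all N, k ∈ ℕ. Then F(z) = ∫_ℝ f(t) e^{-z t} dt converges absolutely for every z in the closed strip S_a = {z ∈ ℂ : |Re z| ≤ a}, F is continuous on S_a and holomorphic on the open strip S_a° = {z : |Re z| < a}, for every m ∈ ℕ the m-th derivative of F on S_a° is given by z ↦ ∫_ℝ (-t)^m f(t) e^{-z t} dt, which is continuous on all of S_a, and for every N, m ∈ ℕ there is a constant C > 0, depending only on a, N, m, such that sup_{z ∈ S_a}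 (1+|z|)^N |F^{(m)}(z)| ≤ C · max_{k ≤ N} sup_{t ∈ ℝ} (1+|t|)^{m+2} cosh(a t) |f^{(k)}(t)|. -/
/-!
Write `𝓕[g](z) = ∫ g t e^{-zt} dt` (`twoSidedLaplace g z`). On the closed strip `|Re z| ≤ a`
one has `|e^{-zt}| ≤ e^{a|t|} ≤ 2 cosh (a t)`, so for every `g` with
`(1 + |t|)^2 cosh (a t) |g t| ≤ C` the integrand `g t e^{-zt}` is dominated by the integrable
function `2C / (1 + t^2)`, uniformly in `z`. Dominated convergence then gives absolute convergence,
continuity on the closed strip and differentiation under the integral sign on the open strip,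
where `d/dz 𝓕[(-t)^m f] = 𝓕[(-t)^{m+1} f]`. For the decay in `z`, integration by parts gives
`z 𝓕[(-t)^m f] = -m 𝓕[(-t)^{m-1} f] + 𝓕[(-t)^m f']`, and induction on `N` yields
`(1 + |z|)^N |𝓕[(-t)^m f](z)| ≤ 2π (m + 2)^N M`.
-/

open MeasureTheory Complex

/-- The weighted-Schwartz seminorm bounds: all seminorms
`sup_t (1+|t|)^N cosh(at) |f^{(k)}(t)|` are finite. Together with smoothness this
defines the weighted Schwartz space `𝓢_a(ℝ)`. -/
def WSchwartzBdd (a : ℝ) (f : ℝ → ℂ) : Prop :=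
  ∀ N k : ℕ, ∃ C : ℝ, ∀ t : ℝ,
    (1 + |t|) ^ N * Real.cosh (a * t) * ‖iteratedDeriv k f t‖ ≤ C

open Set Metric

noncomputable def twoSidedLaplace (g : ℝ → ℂ) (z : ℂ) : ℂ :=
  ∫ t : ℝ, g t * Complex.exp (-(z * (t : ℂ)))

lemma Real.exp_neg_mul_le_two_mul_cosh {a x : ℝ} (hx : |x| ≤ a) (t : ℝ) :
    Real.exp (-(x * t)) ≤ 2 * Real.cosh (a * t) := by
  have ha : 0 ≤ a := (abs_nonneg x).trans hx
  have hxt : -(x * t) ≤ |a * t| := calc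
    -(x * t) ≤ |x| * |t| := (neg_le_abs _).trans (abs_mul x t).le
    _ ≤ |a * t| := by rw [abs_mul, abs_of_nonneg ha]; gcongr
  calc Real.exp (-(x * t)) ≤ Real.exp |a * t| := Real.exp_le_exp.2 hxt
    _ ≤ 2 * Real.cosh (a * t) := by
      rw [Real.cosh_eq]; linarith [Real.exp_abs_le (a * t)]

lemma norm_mul_cexp_neg_mul_le {a C : ℝ} {g : ℝ → ℂ}
    (hg : ∀ t, (1 + |t|) ^ 2 * Real.cosh (a * t) * ‖g t‖ ≤ C) {z : ℂ} (hz : |z.re| ≤ a)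
    (t : ℝ) : ‖g t * Complex.exp (-(z * t))‖ ≤ 2 * C * (1 + t ^ 2)⁻¹ := by
  have hexp : ‖Complex.exp (-(z * t))‖ ≤ 2 * Real.cosh (a * t) := by
    simpa [Complex.norm_exp] using Real.exp_neg_mul_le_two_mul_cosh hz t
  have hweight : 1 + t ^ 2 ≤ (1 + |t|) ^ 2 := by nlinarith [abs_nonneg t, sq_abs t]
  rw [← div_eq_mul_inv, le_div_iff₀ (by positivity), norm_mul]
  calc ‖g t‖ * ‖Complex.exp (-(z * t))‖ * (1 + t ^ 2)
      ≤ ‖g t‖ * (2 * Real.cosh (a * t)) * (1 + |t|) ^ 2 := by gcongr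
    _ = 2 * ((1 + |t|) ^ 2 * Real.cosh (a * t) * ‖g t‖) := by ring
    _ ≤ 2 * C := by linarith [hg t]

lemma integrable_mul_cexp_neg_mul {a C : ℝ} {g : ℝ → ℂ} (hgc : Continuous g)
    (hg : ∀ t, (1 + |t|) ^ 2 * Real.cosh (a * t) * ‖g t‖ ≤ C) {z : ℂ} (hz : |z.re| ≤ a) :
    Integrable fun t : ℝ => g t * Complex.exp (-(z * t)) :=
  (integrable_inv_one_add_sq.const_mul _).mono' (by fun_prop)
    (.of_forall (norm_mul_cexp_neg_mul_le hg hz))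

lemma norm_twoSidedLaplace_le {a C : ℝ} {g : ℝ → ℂ}
    (hg : ∀ t, (1 + |t|) ^ 2 * Real.cosh (a * t) * ‖g t‖ ≤ C) {z : ℂ} (hz : |z.re| ≤ a) :
    ‖twoSidedLaplace g z‖ ≤ 2 * Real.pi * C := calc
  ‖twoSidedLaplace g z‖ ≤ ∫ t : ℝ, 2 * C * (1 + t ^ 2)⁻¹ :=
    norm_integral_le_of_norm_le (integrable_inv_one_add_sq.const_mul _)
      (.of_forall (norm_mul_cexp_neg_mul_le hg hz))
  _ = 2 * Real.pi * C := by rw [integral_const_mul, integral_univ_inv_one_add_sq]; ring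

lemma continuousOn_twoSidedLaplace {a C : ℝ} {g : ℝ → ℂ} (hgc : Continuous g)
    (hg : ∀ t, (1 + |t|) ^ 2 * Real.cosh (a * t) * ‖g t‖ ≤ C) :
    ContinuousOn (twoSidedLaplace g) {z : ℂ | |z.re| ≤ a} :=
  continuousOn_of_dominated (fun _ _ => by fun_prop)
    (fun _ hz => .of_forall (norm_mul_cexp_neg_mul_le hg hz))
    (integrable_inv_one_add_sq.const_mul _) (.of_forall fun _ => by fun_prop)

lemma isOpen_abs_re_lt (a : ℝ) : IsOpen {z : ℂ | |z.re| < a} :=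
  isOpen_lt continuous_re.abs continuous_const

lemma hasDerivAt_twoSidedLaplace {a C C' : ℝ} {g : ℝ → ℂ} (hgc : Continuous g)
    (hg : ∀ t, (1 + |t|) ^ 2 * Real.cosh (a * t) * ‖g t‖ ≤ C)
    (hg' : ∀ t, (1 + |t|) ^ 2 * Real.cosh (a * t) * ‖-(t : ℂ) * g t‖ ≤ C')
    {z : ℂ} (hz : |z.re| < a) :
    HasDerivAt (twoSidedLaplace g) (twoSidedLaplace (fun t => -(t : ℂ) * g t) z) z := by
  obtain ⟨ε, hε, hball⟩ := Metric.isOpen_iff.mp (isOpen_abs_re_lt a) z hz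
  have hderiv (t : ℝ) (w : ℂ) : HasDerivAt (fun w : ℂ => g t * Complex.exp (-(w * t)))
      (-(t : ℂ) * g t * Complex.exp (-(w * t))) w :=
    (((hasDerivAt_id w).mul_const (t : ℂ)).neg.cexp.const_mul (g t)).congr_deriv
      (by simp only [id_eq, Pi.neg_apply]; ring)
  exact (hasDerivAt_integral_of_dominated_loc_of_deriv_le (ball_mem_nhds z hε)
    (.of_forall fun _ => by fun_prop) (integrable_mul_cexp_neg_mul hgc hg hz.le)
    (by fun_prop)
    (.of_forall fun t w hw => norm_mul_cexp_neg_mul_le hg' (hball hw).le t)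
    (integrable_inv_one_add_sq.const_mul _) (.of_forall fun t w _ => hderiv t w)).2

lemma mul_twoSidedLaplace_of_hasDerivAt {g g' : ℝ → ℂ} {z : ℂ}
    (hg : ∀ t, HasDerivAt g (g' t) t)
    (hgi : Integrable fun t : ℝ => g t * Complex.exp (-(z * t)))
    (hg'i : Integrable fun t : ℝ => g' t * Complex.exp (-(z * t))) :
    z * twoSidedLaplace g z = twoSidedLaplace g' z := by
  have hexp (t : ℝ) : HasDerivAt (fun t : ℝ => Complex.exp (-(z * t)))
      (-z * Complex.exp (-(z * t))) t :=
    (((hasDerivAt_id t).ofReal_comp.const_mul z).neg.cexp).congr_deriv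
      (by simp only [id_eq, Pi.neg_apply, ofReal_one]; ring)
  have hgi' : Integrable fun t : ℝ => g t * (-z * Complex.exp (-(z * t))) := by
    simpa only [mul_left_comm _ (-z)] using hgi.const_mul (-z)
  have hparts := integral_mul_deriv_eq_deriv_mul_of_integrable (fun t _ => hg t)
    (fun t _ => hexp t) hgi' hg'i hgi
  simp only [neg_mul, mul_neg, integral_neg, neg_inj, mul_left_comm (g _) z,
    integral_const_mul] at hparts
  exact hparts

lemma iteratedDeriv_eqOn_of_hasDerivAt {𝕜 E : Type*} [NontriviallyNormedField 𝕜]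
    [NormedAddCommGroup E] [NormedSpace 𝕜 E] {G : ℕ → 𝕜 → E} {s : Set 𝕜} (hs : IsOpen s)
    (hG : ∀ m, ∀ z ∈ s, HasDerivAt (G m) (G (m + 1) z) z) (m : ℕ) :
    EqOn (iteratedDeriv m (G 0)) (G m) s := by
  induction m with
  | zero => intro z _; rfl
  | succ m ih =>
    intro z hz
    rw [iteratedDeriv_succ, (ih.eventuallyEq_of_mem (hs.mem_nhds hz)).deriv_eq]
    exact (hG m z hz).deriv

lemma weight_mul_norm_neg_pow_mul_le {a M : ℝ} {n p : ℕ} (hnp : n + 2 ≤ p) {u : ℝ → ℂ}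
    (hu : ∀ t, (1 + |t|) ^ p * Real.cosh (a * t) * ‖u t‖ ≤ M) (t : ℝ) :
    (1 + |t|) ^ 2 * Real.cosh (a * t) * ‖(-(t : ℂ)) ^ n * u t‖ ≤ M := by
  have hone : 1 ≤ 1 + |t| := le_add_of_nonneg_right (abs_nonneg t)
  have hpow : (1 + |t|) ^ 2 * |t| ^ n ≤ (1 + |t|) ^ p := calc
    (1 + |t|) ^ 2 * |t| ^ n ≤ (1 + |t|) ^ 2 * (1 + |t|) ^ n := by gcongr; linarith
    _ = (1 + |t|) ^ (n + 2) := by ring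
    _ ≤ (1 + |t|) ^ p := pow_le_pow_right₀ hone hnp
  calc (1 + |t|) ^ 2 * Real.cosh (a * t) * ‖(-(t : ℂ)) ^ n * u t‖
      = (1 + |t|) ^ 2 * |t| ^ n * (Real.cosh (a * t) * ‖u t‖) := by
        rw [norm_mul, norm_pow, norm_neg, Complex.norm_real, Real.norm_eq_abs]; ring
    _ ≤ (1 + |t|) ^ p * (Real.cosh (a * t) * ‖u t‖) := by gcongr
    _ = (1 + |t|) ^ p * Real.cosh (a * t) * ‖u t‖ := by ring
    _ ≤ M := hu t

lemma hasDerivAt_neg_pow_mul {f : ℝ → ℂ} {f' : ℂ} {t : ℝ} (hf : HasDerivAt f f' t) (m : ℕ) :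
    HasDerivAt (fun t : ℝ => (-(t : ℂ)) ^ m * f t)
      (-(m : ℂ) * ((-(t : ℂ)) ^ (m - 1) * f t) + (-(t : ℂ)) ^ m * f') t :=
  (((hasDerivAt_pow m _).comp t (hasDerivAt_id t).ofReal_comp.neg).mul hf).congr_deriv
    (by simp only [id_eq, Pi.neg_apply, ofReal_one, Function.comp_apply]; ring)

lemma mul_twoSidedLaplace_neg_pow_mul {a M₀ M₁ : ℝ} {m p : ℕ} (hmp : m + 2 ≤ p) {f : ℝ → ℂ}
    (hf : ContDiff ℝ 1 f)
    (hf₀ : ∀ t, (1 + |t|) ^ p * Real.cosh (a * t) * ‖f t‖ ≤ M₀)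
    (hf₁ : ∀ t, (1 + |t|) ^ p * Real.cosh (a * t) * ‖deriv f t‖ ≤ M₁)
    {z : ℂ} (hz : |z.re| ≤ a) :
    z * twoSidedLaplace (fun t => (-(t : ℂ)) ^ m * f t) z =
      -(m : ℂ) * twoSidedLaplace (fun t => (-(t : ℂ)) ^ (m - 1) * f t) z +
        twoSidedLaplace (fun t => (-(t : ℂ)) ^ m * deriv f t) z := by
  have hfc : Continuous f := hf.continuous
  have hf'c : Continuous (deriv f) := hf.continuous_deriv le_rfl
  have hint :=
    integrable_mul_cexp_neg_mul (by fun_prop) (weight_mul_norm_neg_pow_mul_le hmp hf₀) hz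
  have hint₀ := integrable_mul_cexp_neg_mul (by fun_prop)
    (weight_mul_norm_neg_pow_mul_le (n := m - 1) (by omega) hf₀) hz
  have hint₁ :=
    integrable_mul_cexp_neg_mul (by fun_prop) (weight_mul_norm_neg_pow_mul_le hmp hf₁) hz
  have hint' : Integrable fun t : ℝ =>
      (-(m : ℂ) * ((-(t : ℂ)) ^ (m - 1) * f t) + (-(t : ℂ)) ^ m * deriv f t) *
        Complex.exp (-(z * t)) :=
    ((hint₀.const_mul (-(m : ℂ))).add hint₁).congr
      (.of_forall fun t => by simp only [Pi.add_apply]; ring)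
  rw [mul_twoSidedLaplace_of_hasDerivAt
    (fun t => hasDerivAt_neg_pow_mul (hf.differentiable one_ne_zero t).hasDerivAt m) hint hint']
  unfold twoSidedLaplace
  rw [← integral_const_mul, ← integral_add (hint₀.const_mul _) hint₁]
  simp only [mul_assoc, add_mul]

theorem one_add_norm_pow_mul_norm_twoSidedLaplace_le {a M : ℝ} {p : ℕ} (k : ℕ) {m : ℕ}
    (hmp : m + 2 ≤ p) {f : ℝ → ℂ} (hf : ContDiff ℝ k f)
    (hM : ∀ i ≤ k, ∀ t, (1 + |t|) ^ p * Real.cosh (a * t) * ‖iteratedDeriv i f t‖ ≤ M)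
    {z : ℂ} (hz : |z.re| ≤ a) :
    (1 + ‖z‖) ^ k * ‖twoSidedLaplace (fun t => (-(t : ℂ)) ^ m * f t) z‖ ≤
      2 * Real.pi * (m + 2) ^ k * M := by
  induction k generalizing m f with
  | zero =>
    simpa using norm_twoSidedLaplace_le
      (weight_mul_norm_neg_pow_mul_le hmp (by simpa using hM 0 le_rfl)) hz
  | succ k ih =>
    have hM0 : 0 ≤ M := le_trans (by positivity) (hM 0 (by omega) 0)
    have hfk : ContDiff ℝ k f := hf.of_le (by exact_mod_cast k.le_succ)
    have hf' : ContDiff ℝ k (deriv f) := (contDiff_succ_iff_deriv.mp hf).2.2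
    have hparts := mul_twoSidedLaplace_neg_pow_mul hmp
      (hf.of_le (by exact_mod_cast Nat.le_add_left 1 k)) (by simpa using hM 0 (by omega))
      (by simpa using hM 1 (by omega)) hz
    have hmul : ‖z * twoSidedLaplace (fun t => (-(t : ℂ)) ^ m * f t) z‖ ≤
        m * ‖twoSidedLaplace (fun t => (-(t : ℂ)) ^ (m - 1) * f t) z‖ +
          ‖twoSidedLaplace (fun t => (-(t : ℂ)) ^ m * deriv f t) z‖ := by
      rw [hparts]
      refine (norm_add_le _ _).trans_eq ?_
      rw [norm_mul, norm_neg, Complex.norm_natCast]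
    have hsame := ih hmp hfk (fun i hi => hM i (by omega))
    have hlower := ih (m := m - 1) (by omega) hfk (fun i hi => hM i (by omega))
    have hderiv := ih hmp hf' fun i hi t => by
      rw [← iteratedDeriv_succ']; exact hM (i + 1) (by omega) t
    have hm : ((m - 1 : ℕ) : ℝ) + 2 ≤ m + 2 := by gcongr; exact Nat.cast_le.mpr (m.sub_le 1)
    calc (1 + ‖z‖) ^ (k + 1) * ‖twoSidedLaplace (fun t => (-(t : ℂ)) ^ m * f t) z‖
        = (1 + ‖z‖) ^ k * ‖twoSidedLaplace (fun t => (-(t : ℂ)) ^ m * f t) z‖ +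
            (1 + ‖z‖) ^ k * ‖z * twoSidedLaplace (fun t => (-(t : ℂ)) ^ m * f t) z‖ := by
          rw [norm_mul]; ring
      _ ≤ (1 + ‖z‖) ^ k * ‖twoSidedLaplace (fun t => (-(t : ℂ)) ^ m * f t) z‖ +
            (m * ((1 + ‖z‖) ^ k * ‖twoSidedLaplace (fun t => (-(t : ℂ)) ^ (m - 1) * f t) z‖) +
              (1 + ‖z‖) ^ k * ‖twoSidedLaplace (fun t => (-(t : ℂ)) ^ m * deriv f t) z‖) := by
          gcongr
          exact (mul_le_mul_of_nonneg_left hmul (by positivity)).trans_eq (by ring)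
      _ ≤ 2 * Real.pi * (m + 2) ^ k * M +
            (m * (2 * Real.pi * (((m - 1 : ℕ) : ℝ) + 2) ^ k * M) +
              2 * Real.pi * (m + 2) ^ k * M) := by
          gcongr
      _ ≤ 2 * Real.pi * (m + 2) ^ k * M +
            (m * (2 * Real.pi * (m + 2) ^ k * M) + 2 * Real.pi * (m + 2) ^ k * M) := by
          gcongr
      _ = 2 * Real.pi * (m + 2) ^ (k + 1) * M := by ring

lemma WSchwartzBdd.exists_bound_neg_pow_mul {a : ℝ} {f : ℝ → ℂ} (hW : WSchwartzBdd a f)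
    (n : ℕ) : ∃ C, ∀ t, (1 + |t|) ^ 2 * Real.cosh (a * t) * ‖(-(t : ℂ)) ^ n * f t‖ ≤ C :=
  let ⟨C, hC⟩ := hW (n + 2) 0
  ⟨C, weight_mul_norm_neg_pow_mul_le le_rfl (by simpa using hC)⟩

lemma WSchwartzBdd.continuousOn_twoSidedLaplace_neg_pow_mul {a : ℝ} {f : ℝ → ℂ}
    (hW : WSchwartzBdd a f) (hf : Continuous f) (m : ℕ) :
    ContinuousOn (twoSidedLaplace fun t => (-(t : ℂ)) ^ m * f t) {z : ℂ | |z.re| ≤ a} :=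
  let ⟨_, hC⟩ := hW.exists_bound_neg_pow_mul m
  continuousOn_twoSidedLaplace (by fun_prop) hC

lemma WSchwartzBdd.hasDerivAt_twoSidedLaplace_neg_pow_mul {a : ℝ} {f : ℝ → ℂ}
    (hW : WSchwartzBdd a f) (hf : Continuous f) (m : ℕ) {z : ℂ} (hz : |z.re| < a) :
    HasDerivAt (twoSidedLaplace fun t => (-(t : ℂ)) ^ m * f t)
      (twoSidedLaplace (fun t => (-(t : ℂ)) ^ (m + 1) * f t) z) z := by
  obtain ⟨C, hC⟩ := hW.exists_bound_neg_pow_mul m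
  obtain ⟨C', hC'⟩ := hW.exists_bound_neg_pow_mul (m + 1)
  have hC'' (t : ℝ) :
      (1 + |t|) ^ 2 * Real.cosh (a * t) * ‖-(t : ℂ) * ((-(t : ℂ)) ^ m * f t)‖ ≤ C' := by
    rw [← mul_assoc, ← pow_succ']; exact hC' t
  simpa only [← mul_assoc, ← pow_succ'] using
    hasDerivAt_twoSidedLaplace (by fun_prop) hC hC'' hz

theorem stmt_3_general (a : ℝ) :
    (∀ f : ℝ → ℂ, ContDiff ℝ (⊤ : ℕ∞) f → WSchwartzBdd a f →
      ∀ F : ℂ → ℂ, (∀ z : ℂ, F z = ∫ t : ℝ, f t * Complex.exp (-(z * (t : ℂ)))) →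
      (∀ z : ℂ, |z.re| ≤ a →
        Integrable fun t : ℝ => f t * Complex.exp (-(z * (t : ℂ)))) ∧
      ContinuousOn F {z : ℂ | |z.re| ≤ a} ∧
      DifferentiableOn ℂ F {z : ℂ | |z.re| < a} ∧
      (∀ m : ℕ,
        (∀ z : ℂ, |z.re| < a →
          iteratedDeriv m F z = ∫ t : ℝ, (-(t : ℂ)) ^ m * f t * Complex.exp (-(z * (t : ℂ)))) ∧
        ContinuousOn (fun z : ℂ => ∫ t : ℝ, (-(t : ℂ)) ^ m * f t * Complex.exp (-(z * (t : ℂ))))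
          {z : ℂ | |z.re| ≤ a})) ∧
    (∀ N m : ℕ, ∃ C > (0 : ℝ), ∀ f : ℝ → ℂ, ContDiff ℝ (⊤ : ℕ∞) f → WSchwartzBdd a f →
      ∀ M : ℝ,
      (∀ k ≤ N, ∀ t : ℝ,
        (1 + |t|) ^ (m + 2) * Real.cosh (a * t) * ‖iteratedDeriv k f t‖ ≤ M) →
      ∀ z : ℂ, |z.re| ≤ a →
        (1 + ‖z‖) ^ N *
          ‖∫ t : ℝ, (-(t : ℂ)) ^ m * f t * Complex.exp (-(z * (t : ℂ)))‖ ≤ C * M) := by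
  refine ⟨fun f hf hW F hF => ?_, fun N m => ⟨2 * Real.pi * (m + 2) ^ N, by positivity,
    fun f hf _ M hM z hz => one_add_norm_pow_mul_norm_twoSidedLaplace_le N le_rfl
      (hf.of_le (by exact_mod_cast le_top)) hM hz⟩⟩
  have hF₀ : F = twoSidedLaplace fun t => (-(t : ℂ)) ^ 0 * f t :=
    funext fun z => by simp [hF, twoSidedLaplace]
  have hderiv (m : ℕ) (z : ℂ) (hz : |z.re| < a) :=
    hW.hasDerivAt_twoSidedLaplace_neg_pow_mul hf.continuous m hz
  subst hF₀
  refine ⟨fun z hz => ?_, hW.continuousOn_twoSidedLaplace_neg_pow_mul hf.continuous 0,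
    fun z hz => (hderiv 0 z hz).differentiableAt.differentiableWithinAt,
    fun m => ⟨iteratedDeriv_eqOn_of_hasDerivAt (isOpen_abs_re_lt a) hderiv m,
      hW.continuousOn_twoSidedLaplace_neg_pow_mul hf.continuous m⟩⟩
  obtain ⟨C, hC⟩ := hW.exists_bound_neg_pow_mul 0
  simpa using integrable_mul_cexp_neg_mul hf.continuous (by simpa using hC) hz

/-- **Continuity of the Fourier transform from `𝓢_a(ℝ)` into the strip-Schwartz space**
(part of Lemma 2.2.4 of the paper). For `f ∈ 𝓢_a(ℝ)`, `F z = ∫ f t e^{-zt} dt` converges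
absolutely on the closed strip `|Re z| ≤ a`, is continuous there and holomorphic on the open
strip, its `m`-th derivative on the open strip is `z ↦ ∫ (-t)^m f t e^{-zt} dt` (which is
continuous on the closed strip), and for each `N, m` there is a constant `C`, depending only
on `a, N, m`, bounding `(1+|z|)^N |F^{(m)}(z)|` by `C` times the maximum over `k ≤ N` of
`sup_t (1+|t|)^{m+2} cosh(at) |f^{(k)}(t)|`. -/
theorem stmt_3 (a : ℝ) (ha : 0 < a) :
    (∀ f : ℝ → ℂ, ContDiff ℝ (⊤ : ℕ∞) f → WSchwartzBdd a f →
      ∀ F : ℂ → ℂ, (∀ z : ℂ, F z = ∫ t : ℝ, f t * Complex.exp (-(z * (t : ℂ)))) →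
      (∀ z : ℂ, |z.re| ≤ a →
        Integrable fun t : ℝ => f t * Complex.exp (-(z * (t : ℂ)))) ∧
      ContinuousOn F {z : ℂ | |z.re| ≤ a} ∧
      DifferentiableOn ℂ F {z : ℂ | |z.re| < a} ∧
      (∀ m : ℕ,
        (∀ z : ℂ, |z.re| < a →
          iteratedDeriv m F z = ∫ t : ℝ, (-(t : ℂ)) ^ m * f t * Complex.exp (-(z * (t : ℂ)))) ∧
        ContinuousOn (fun z : ℂ => ∫ t : ℝ, (-(t : ℂ)) ^ m * f t * Complex.exp (-(z * (t : ℂ))))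
          {z : ℂ | |z.re| ≤ a})) ∧
    (∀ N m : ℕ, ∃ C > (0 : ℝ), ∀ f : ℝ → ℂ, ContDiff ℝ (⊤ : ℕ∞) f → WSchwartzBdd a f →
      ∀ M : ℝ,
      (∀ k ≤ N, ∀ t : ℝ,
        (1 + |t|) ^ (m + 2) * Real.cosh (a * t) * ‖iteratedDeriv k f t‖ ≤ M) →
      ∀ z : ℂ, |z.re| ≤ a →
        (1 + ‖z‖) ^ N *
          ‖∫ t : ℝ, (-(t : ℂ)) ^ m * f t * Complex.exp (-(z * (t : ℂ)))‖ ≤ C * M) :=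
  stmt_3_general a
end

section
/- Let a > 0 and let F belong to the strip-Schwartz space 𝓢(S_a): F : S_a → ℂ is continuous on the closed strip S_a = {z ∈ ℂ : |Re z| ≤ a}, holomorphic on its interior S_a°, every complex derivative F^{(k)} extends continuously from S_a° to S_a, and sup_{z ∈ S_a} (1+|z|)^N |F^{(k)}(z)| < ∞ for all N, k ∈ ℕ. Define g(t) = (1/2π) ∫_ℝ F(iν) e^{iνt} dν. Then g is infinitely differentiable on ℝ, and for every N, m ∈ ℕ there is a constant C > 0, depending only on a, N, m, such that sup_{t ∈ ℝ} (1+|t|)^N cosh(a t) |g^{(m)}(t)| ≤ C · max_{j ≤ N} sup_{z ∈ S_a} (1+|z|)^{m+2} |F^{(j)}(z)|. In particular g ∈ 𝓢_a(ℝ). -/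
/-!
Differentiating under the integral, `g^{(m)}(t) = (1/2π) ∫ G(iν) e^{iνt} dν` with `G(z) = z^m F(z)`.
Since `G(z) e^{zt}` is holomorphic on the strip and decays like `(1 + (Im z)²)⁻¹` together with the
derivatives of `G`, its integral over the vertical line `Re z = σ` does not depend on `σ ∈ (-a, a)`,
so `g^{(m)}(t) = (e^{tσ}/2π) ∫ G(σ + iν) e^{iνt} dν`. Integrating by parts along that line trades
`t^k` for `G^{(k)}`, which the Leibniz rule bounds by the seminorms of `F`. Finally `σ = ∓(a - ε)`
with `ε |t| ≤ 1` gives `cosh(at) e^{tσ} ≤ e`.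
-/

open MeasureTheory Complex

/-- The closed strip `S_a = {z : |Re z| ≤ a}`. -/
def Strip (a : ℝ) : Set ℂ := {z : ℂ | |z.re| ≤ a}

/-- The open strip `S_a° = {z : |Re z| < a}`. -/
def StripO (a : ℝ) : Set ℂ := {z : ℂ | |z.re| < a}

/-- Membership in the strip-Schwartz space `𝓢(S_a)`: `F` is continuous on the closed strip,
holomorphic on the open strip, `Fd k` is the continuous extension to the closed strip of the
`k`-th complex derivative of `F` (so `Fd 0 = F` on `S_a` and `Fd k = F^{(k)}` on `S_a°`),
and all seminorms `sup_{z ∈ S_a} (1+|z|)^N |Fd k z|` are finite. -/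
def StripSchwartz (a : ℝ) (F : ℂ → ℂ) (Fd : ℕ → ℂ → ℂ) : Prop :=
  ContinuousOn F (Strip a) ∧
  DifferentiableOn ℂ F (StripO a) ∧
  (∀ z ∈ Strip a, Fd 0 z = F z) ∧
  (∀ k : ℕ, ∀ z ∈ StripO a, Fd k z = iteratedDeriv k F z) ∧
  (∀ k : ℕ, ContinuousOn (Fd k) (Strip a)) ∧
  (∀ N k : ℕ, ∃ C : ℝ, ∀ z ∈ Strip a,
    (1 + ‖z‖) ^ N * ‖Fd k z‖ ≤ C)

open Filter

namespace StripFourier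

variable {a σ ν C : ℝ} {G : ℂ → ℂ}

lemma isOpen_stripO (a : ℝ) : IsOpen (StripO a) :=
  isOpen_lt (continuous_abs.comp continuous_re) continuous_const

lemma stripO_subset_strip : StripO a ⊆ Strip a := fun z (hz : |z.re| < a) => hz.le

lemma line_mem_stripO (hσ : |σ| < a) (ν : ℝ) : (σ : ℂ) + ν * I ∈ StripO a := by
  simp [StripO, hσ]

def InvSqDecayOn (U : Set ℂ) (G : ℂ → ℂ) : Prop :=
  ∃ C : ℝ, ∀ z ∈ U, ‖G z‖ ≤ C * (1 + z.im ^ 2)⁻¹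

noncomputable def lineFourier (G : ℂ → ℂ) (σ t : ℝ) : ℂ :=
  ∫ ν : ℝ, G (σ + ν * I) * exp (I * ν * t)

lemma norm_cexp_I_mul_mul (ν t : ℝ) : ‖exp (I * ν * t)‖ = 1 := by
  rw [show I * ν * t = ((ν * t : ℝ) : ℂ) * I by push_cast; ring, norm_exp_ofReal_mul_I]

lemma hasDerivAt_cexp_mul_ofReal (c : ℂ) (t : ℝ) :
    HasDerivAt (fun s : ℝ => exp (c * s)) (c * exp (c * t)) t := by
  simpa [mul_comm] using (((hasDerivAt_id (t : ℂ)).const_mul c).cexp).comp_ofReal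

lemma hasDerivAt_comp_vertical {φ : ℂ → ℂ} (h : DifferentiableAt ℂ φ (σ + ν * I)) :
    HasDerivAt (fun ν : ℝ => φ (σ + ν * I)) (I * deriv φ (σ + ν * I)) ν := by
  have hline : HasDerivAt (fun w : ℂ => σ + w * I) I ν := by
    simpa using ((hasDerivAt_id (ν : ℂ)).mul_const I).const_add (σ : ℂ)
  simpa [Function.comp_def, mul_comm] using (h.hasDerivAt.comp (ν : ℂ) hline).comp_ofReal

lemma hasDerivAt_comp_horizontal {φ : ℂ → ℂ} (h : DifferentiableAt ℂ φ (σ + ν * I)) :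
    HasDerivAt (fun σ : ℝ => φ (σ + ν * I)) (deriv φ (σ + ν * I)) σ := by
  have hline : HasDerivAt (fun w : ℂ => w + ν * I) 1 σ := (hasDerivAt_id (σ : ℂ)).add_const _
  simpa [Function.comp_def] using (h.hasDerivAt.comp (σ : ℂ) hline).comp_ofReal

lemma continuous_lineFourier_integrand (hG : ContinuousOn G (StripO a)) (hσ : |σ| < a) (t : ℝ) :
    Continuous fun ν : ℝ => G (σ + ν * I) * exp (I * ν * t) :=
  (hG.comp_continuous (by fun_prop) (line_mem_stripO hσ)).mul (by fun_prop)

lemma norm_lineFourier_integrand_le (hG : ∀ z ∈ StripO a, ‖G z‖ ≤ C * (1 + z.im ^ 2)⁻¹)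
    (hσ : |σ| < a) (t ν : ℝ) :
    ‖G (σ + ν * I) * exp (I * ν * t)‖ ≤ C * (1 + ν ^ 2)⁻¹ := by
  simpa [norm_cexp_I_mul_mul] using hG _ (line_mem_stripO hσ ν)

lemma integrable_lineFourier_integrand (hc : ContinuousOn G (StripO a))
    (hG : InvSqDecayOn (StripO a) G) (hσ : |σ| < a) (t : ℝ) :
    Integrable fun ν : ℝ => G (σ + ν * I) * exp (I * ν * t) := by
  obtain ⟨C, hC⟩ := hG
  exact (integrable_inv_one_add_sq.const_mul C).mono'
    (continuous_lineFourier_integrand hc hσ t).aestronglyMeasurable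
    (ae_of_all _ (norm_lineFourier_integrand_le hC hσ t))

lemma norm_lineFourier_le (hG : ∀ z ∈ StripO a, ‖G z‖ ≤ C * (1 + z.im ^ 2)⁻¹)
    (hσ : |σ| < a) (t : ℝ) : ‖lineFourier G σ t‖ ≤ C * Real.pi := by
  calc ‖lineFourier G σ t‖ ≤ ∫ ν : ℝ, C * (1 + ν ^ 2)⁻¹ :=
        norm_integral_le_of_norm_le (integrable_inv_one_add_sq.const_mul C)
          (ae_of_all _ (norm_lineFourier_integrand_le hG hσ t))
    _ = C * Real.pi := by rw [integral_const_mul, integral_univ_inv_one_add_sq]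

lemma mul_lineFourier (hG : DifferentiableOn ℂ G (StripO a)) (h₀ : InvSqDecayOn (StripO a) G)
    (h₁ : InvSqDecayOn (StripO a) (deriv G)) (hσ : |σ| < a) (t : ℝ) :
    t * lineFourier G σ t = -lineFourier (deriv G) σ t := by
  have hu (ν : ℝ) : HasDerivAt (fun ν : ℝ => G (σ + ν * I)) (I * deriv G (σ + ν * I)) ν :=
    hasDerivAt_comp_vertical
      (hG.differentiableAt ((isOpen_stripO a).mem_nhds (line_mem_stripO hσ ν)))
  have hv (ν : ℝ) : HasDerivAt (fun ν : ℝ => exp (I * ν * t)) (I * t * exp (I * ν * t)) ν := by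
    simpa [mul_right_comm I] using hasDerivAt_cexp_mul_ofReal (I * t) ν
  have int₀ := integrable_lineFourier_integrand hG.continuousOn h₀ hσ t
  have int₁ := integrable_lineFourier_integrand
    (hG.deriv (isOpen_stripO a)).continuousOn h₁ hσ t
  have parts := integral_mul_deriv_eq_deriv_mul_of_integrable (fun ν _ => hu ν)
    (fun ν _ => hv ν)
    ((int₀.const_mul (I * t)).congr (ae_of_all _ fun ν => by simp only [Pi.mul_apply]; ring))
    ((int₁.const_mul I).congr (ae_of_all _ fun ν => by simp only [Pi.mul_apply]; ring)) int₀
  have e₀ : ∫ ν : ℝ, G (σ + ν * I) * (I * t * exp (I * ν * t)) = I * t * lineFourier G σ t := by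
    rw [lineFourier, ← integral_const_mul]; congr 1; ext ν; ring
  have e₁ : ∫ ν : ℝ, I * deriv G (σ + ν * I) * exp (I * ν * t) =
      I * lineFourier (deriv G) σ t := by
    rw [lineFourier, ← integral_const_mul]; congr 1; ext ν; ring
  rw [e₀, e₁] at parts
  exact mul_left_cancel₀ I_ne_zero (by linear_combination parts)

lemma pow_mul_lineFourier (hG : DifferentiableOn ℂ G (StripO a)) {k : ℕ}
    (hdec : ∀ j ≤ k, InvSqDecayOn (StripO a) (deriv^[j] G)) (hσ : |σ| < a) (t : ℝ) :
    (t : ℂ) ^ k * lineFourier G σ t = (-1) ^ k * lineFourier (deriv^[k] G) σ t := by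
  induction k with
  | zero => simp
  | succ k ih =>
    have hGk := ((hG.analyticOnNhd (isOpen_stripO a)).iterated_deriv k).differentiableOn
    have hk := mul_lineFourier hGk (hdec k k.le_succ) (by
      simpa only [Function.iterate_succ_apply'] using hdec (k + 1) le_rfl) hσ t
    rw [Function.iterate_succ_apply', pow_succ', mul_assoc,
      ih fun j hj => hdec j (hj.trans k.le_succ)]
    linear_combination (-1) ^ k * hk

lemma hasDerivAt_lineFourier_re (hG : DifferentiableOn ℂ G (StripO a))
    (h₀ : InvSqDecayOn (StripO a) G) (h₁ : InvSqDecayOn (StripO a) (deriv G)) (hσ : |σ| < a)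
    (t : ℝ) : HasDerivAt (fun s : ℝ => lineFourier G s t) (lineFourier (deriv G) σ t) σ := by
  obtain ⟨C₁, hC₁⟩ := h₁
  have hIoo : ∀ s ∈ Set.Ioo (-a) a, |s| < a := fun s hs => abs_lt.mpr hs
  have hG' := (hG.deriv (isOpen_stripO a)).continuousOn
  refine (hasDerivAt_integral_of_dominated_loc_of_deriv_le (bound := fun ν => C₁ * (1 + ν ^ 2)⁻¹)
    (isOpen_Ioo.mem_nhds (abs_lt.mp hσ)) ?_
    (integrable_lineFourier_integrand hG.continuousOn h₀ hσ t)
    (continuous_lineFourier_integrand hG' hσ t).aestronglyMeasurable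
    (ae_of_all _ fun ν s hs => norm_lineFourier_integrand_le hC₁ (hIoo s hs) t ν)
    (integrable_inv_one_add_sq.const_mul C₁)
    (ae_of_all _ fun ν s hs => ?_)).2
  · filter_upwards [isOpen_Ioo.mem_nhds (abs_lt.mp hσ)] with s hs
    exact (continuous_lineFourier_integrand hG.continuousOn (hIoo s hs) t).aestronglyMeasurable
  · exact (hasDerivAt_comp_horizontal (hG.differentiableAt ((isOpen_stripO a).mem_nhds
      (line_mem_stripO (hIoo s hs) ν)))).mul_const _

/-- The left side is `-i ∫ G(z) e^{zt} dz` over the line `Re z = σ`: a contour shift. -/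
lemma cexp_mul_lineFourier_eq (hG : DifferentiableOn ℂ G (StripO a))
    (h₀ : InvSqDecayOn (StripO a) G) (h₁ : InvSqDecayOn (StripO a) (deriv G)) {σ' : ℝ}
    (hσ : |σ| < a) (hσ' : |σ'| < a) (t : ℝ) :
    exp (t * σ) * lineFourier G σ t = exp (t * σ') * lineFourier G σ' t := by
  have hderiv : ∀ s ∈ Set.Ioo (-a) a,
      HasDerivAt (fun s : ℝ => exp (t * s) * lineFourier G s t) 0 s := by
    intro s hs
    have hs' : |s| < a := abs_lt.mpr hs
    refine ((hasDerivAt_cexp_mul_ofReal t s).fun_mul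
      (hasDerivAt_lineFourier_re hG h₀ h₁ hs' t)).congr_deriv ?_
    linear_combination exp (t * s) * mul_lineFourier hG h₀ h₁ hs' t
  exact isOpen_Ioo.is_const_of_deriv_eq_zero isPreconnected_Ioo
    (fun s hs => (hderiv s hs).differentiableAt.differentiableWithinAt)
    (fun s hs => (hderiv s hs).deriv) (abs_lt.mp hσ) (abs_lt.mp hσ')

lemma one_add_im_sq_le (z : ℂ) : 1 + z.im ^ 2 ≤ (1 + ‖z‖) ^ 2 := by
  have := abs_im_le_norm z
  nlinarith [sq_abs z.im, abs_nonneg z.im]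

def powMul (F : ℂ → ℂ) (m : ℕ) : ℂ → ℂ := (· ^ m) * F

lemma descFactorial_le_succ_pow {m i N : ℕ} (hi : i ≤ N) :
    (m.descFactorial i : ℝ) ≤ (m + 1) ^ N := by
  calc (m.descFactorial i : ℝ) ≤ ((m + 1) ^ i : ℕ) :=
        Nat.cast_le.mpr ((m.descFactorial_le_pow i).trans (Nat.pow_le_pow_left m.le_succ i))
    _ ≤ (m + 1) ^ N := by push_cast; exact pow_le_pow_right₀ (by linarith) hi

/-- Leibniz rule: the factor `z^m` uses up `(1 + ‖z‖)^m` of the decay of the derivatives of `F`. -/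
lemma norm_iterate_deriv_powMul_le {U : Set ℂ} (hU : IsOpen U) {F : ℂ → ℂ}
    (hF : DifferentiableOn ℂ F U) {m N k : ℕ} (hk : k ≤ N) {z : ℂ} (hz : z ∈ U) {M : ℝ}
    (hM : ∀ j ≤ N, (1 + ‖z‖) ^ (m + 2) * ‖iteratedDeriv j F z‖ ≤ M) :
    ‖deriv^[k] (powMul F m) z‖ ≤ (2 * (m + 1)) ^ N * M * ((1 + ‖z‖) ^ 2)⁻¹ := by
  have hM₀ : 0 ≤ M := (by positivity : (0 : ℝ) ≤ _).trans (hM 0 (Nat.zero_le N))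
  have hterm : ∀ i ∈ Finset.range (k + 1),
      ‖(k.choose i : ℂ) * iteratedDeriv i (· ^ m) z * iteratedDeriv (k - i) F z‖ ≤
        k.choose i * ((m + 1) ^ N * M * ((1 + ‖z‖) ^ 2)⁻¹) := by
    intro i hi
    have hik : i ≤ k := Nat.lt_succ_iff.mp (Finset.mem_range.mp hi)
    have hpow : ‖z‖ ^ (m - i) ≤ (1 + ‖z‖) ^ m :=
      (pow_le_pow_left₀ (norm_nonneg z) (by linarith) _).trans
        (pow_le_pow_right₀ (by linarith [norm_nonneg z]) (Nat.sub_le m i))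
    have hFj : ‖iteratedDeriv (k - i) F z‖ ≤ M / (1 + ‖z‖) ^ (m + 2) := by
      rw [le_div_iff₀ (by positivity), mul_comm]
      exact hM (k - i) ((Nat.sub_le k i).trans hk)
    calc ‖(k.choose i : ℂ) * iteratedDeriv i (· ^ m) z * iteratedDeriv (k - i) F z‖
        = k.choose i * (m.descFactorial i * ‖z‖ ^ (m - i)) * ‖iteratedDeriv (k - i) F z‖ := by
          simp [iteratedDeriv_pow]
      _ ≤ k.choose i * ((m + 1) ^ N * (1 + ‖z‖) ^ m) * (M / (1 + ‖z‖) ^ (m + 2)) := by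
          gcongr
          · exact descFactorial_le_succ_pow (hik.trans hk)
      _ = k.choose i * ((m + 1) ^ N * M * ((1 + ‖z‖) ^ 2)⁻¹) := by
          field_simp
          ring
  have hFan := hF.analyticOnNhd hU z hz
  rw [← iteratedDeriv_eq_iterate, powMul,
    iteratedDeriv_mul (by fun_prop : ContDiffAt ℂ k (· ^ m : ℂ → ℂ) z) hFan.contDiffAt]
  calc _ ≤ ∑ i ∈ Finset.range (k + 1), k.choose i * ((m + 1) ^ N * M * ((1 + ‖z‖) ^ 2)⁻¹) :=
        (norm_sum_le _ _).trans (Finset.sum_le_sum hterm)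
    _ = 2 ^ k * ((m + 1) ^ N * M * ((1 + ‖z‖) ^ 2)⁻¹) := by
        rw [← Finset.sum_mul, ← Nat.cast_sum, Nat.sum_range_choose]; push_cast; rfl
    _ ≤ 2 ^ N * ((m + 1) ^ N * M * ((1 + ‖z‖) ^ 2)⁻¹) := by
        gcongr; norm_num
    _ = (2 * (m + 1)) ^ N * M * ((1 + ‖z‖) ^ 2)⁻¹ := by rw [mul_pow]; ring

lemma hasDerivAt_integral_mul_cexp {φ : ℝ → ℂ} (hφ : Integrable φ)
    (hνφ : Integrable fun ν : ℝ => ν * φ ν) (t : ℝ) :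
    HasDerivAt (fun t : ℝ => ∫ ν : ℝ, φ ν * exp (I * ν * t))
      (∫ ν : ℝ, I * (ν * φ ν) * exp (I * ν * t)) t := by
  refine (hasDerivAt_integral_of_dominated_loc_of_deriv_le
    (F := fun (t : ℝ) ν => φ ν * exp (I * ν * t))
    (F' := fun t ν => I * (ν * φ ν) * exp (I * ν * t))
    (bound := fun ν => ‖ν * φ ν‖)
    Filter.univ_mem (Eventually.of_forall fun s => hφ.aestronglyMeasurable.mul
      (by fun_prop : Continuous fun ν : ℝ => exp (I * ν * s)).aestronglyMeasurable) ?_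
    ((hνφ.const_mul I).aestronglyMeasurable.mul
      (by fun_prop : Continuous fun ν : ℝ => exp (I * ν * t)).aestronglyMeasurable)
    (ae_of_all _ fun ν s _ => ?_) hνφ.norm (ae_of_all _ fun ν s _ => ?_)).2
  · exact hφ.mul_bdd (by fun_prop : Continuous fun ν : ℝ => exp (I * ν * t)).aestronglyMeasurable
      (ae_of_all _ fun ν => (norm_cexp_I_mul_mul ν t).le)
  · simp [norm_cexp_I_mul_mul]
  · simpa [mul_assoc, mul_comm, mul_left_comm] using
      (hasDerivAt_cexp_mul_ofReal (I * ν) s).const_mul (φ ν)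

end StripFourier

lemma Real.cosh_le_exp_abs (x : ℝ) : Real.cosh x ≤ Real.exp |x| := by
  rw [Real.cosh_eq]
  linarith [Real.exp_le_exp.2 (le_abs_self x), Real.exp_le_exp.2 (neg_le_abs x)]

lemma exists_abs_lt_cosh_mul_exp_le {a : ℝ} (ha : 0 < a) (t : ℝ) :
    ∃ σ : ℝ, |σ| < a ∧ Real.cosh (a * t) * Real.exp (t * σ) ≤ Real.exp 1 := by
  set ε := a / (1 + a * |t|)
  have hε : 0 < ε := by positivity
  have hεt : ε * |t| ≤ 1 := by
    rw [div_mul_eq_mul_div, div_le_one (by positivity)]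
    linarith
  have hεa : ε ≤ a := div_le_self ha.le (by nlinarith [abs_nonneg t])
  refine ⟨if 0 ≤ t then ε - a else a - ε, ?_, ?_⟩
  · split_ifs <;> rw [abs_lt] <;> constructor <;> linarith
  have htσ : t * (if 0 ≤ t then ε - a else a - ε) = (ε - a) * |t| := by
    split_ifs with h
    · rw [abs_of_nonneg h]; ring
    · rw [abs_of_neg (not_le.mp h)]; ring
  calc Real.cosh (a * t) * Real.exp (t * (if 0 ≤ t then ε - a else a - ε))
      ≤ Real.exp (a * |t|) * Real.exp ((ε - a) * |t|) := by
        rw [htσ]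
        gcongr
        simpa [abs_mul, abs_of_pos ha] using Real.cosh_le_exp_abs (a * t)
    _ = Real.exp (ε * |t|) := by rw [← Real.exp_add]; ring_nf
    _ ≤ Real.exp 1 := Real.exp_le_exp.2 hεt

namespace StripSchwartz

open StripFourier

variable {a : ℝ} {F : ℂ → ℂ} {Fd : ℕ → ℂ → ℂ}

lemma exists_seminorm_bound (hF : StripSchwartz a F Fd) (N n : ℕ) :
    ∃ M : ℝ, ∀ j ≤ N, ∀ z ∈ Strip a, (1 + ‖z‖) ^ n * ‖Fd j z‖ ≤ M := by
  choose C hC using fun j => hF.2.2.2.2.2 n j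
  obtain ⟨M, hM⟩ := ((Finset.range (N + 1)).image C).exists_le
  exact ⟨M, fun j hj z hz => (hC j z hz).trans
    (hM _ (Finset.mem_image_of_mem C (Finset.mem_range.mpr (Nat.lt_succ_of_le hj))))⟩

lemma norm_iterate_deriv_powMul_le (hF : StripSchwartz a F Fd) {m N k : ℕ} {M : ℝ}
    (hM : ∀ j ≤ N, ∀ z ∈ Strip a, (1 + ‖z‖) ^ (m + 2) * ‖Fd j z‖ ≤ M) (hk : k ≤ N) {z : ℂ}
    (hz : z ∈ StripO a) :
    ‖deriv^[k] (powMul F m) z‖ ≤ (2 * (m + 1)) ^ N * M * (1 + z.im ^ 2)⁻¹ := by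
  have hM' (j : ℕ) (hj : j ≤ N) : (1 + ‖z‖) ^ (m + 2) * ‖iteratedDeriv j F z‖ ≤ M := by
    rw [← hF.2.2.2.1 j z hz]
    exact hM j hj z (stripO_subset_strip hz)
  have hM₀ : 0 ≤ M := (by positivity : (0 : ℝ) ≤ _).trans (hM' 0 (Nat.zero_le N))
  refine (StripFourier.norm_iterate_deriv_powMul_le (isOpen_stripO a) hF.2.1 hk hz hM').trans ?_
  gcongr
  exact one_add_im_sq_le z

lemma invSqDecayOn_iterate_deriv_powMul (hF : StripSchwartz a F Fd) (m k : ℕ) :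
    InvSqDecayOn (StripO a) (deriv^[k] (powMul F m)) := by
  obtain ⟨M, hM⟩ := hF.exists_seminorm_bound k (m + 2)
  exact ⟨_, fun z hz => hF.norm_iterate_deriv_powMul_le hM le_rfl hz⟩

lemma hasDerivAt_lineFourier_powMul (hF : StripSchwartz a F Fd) (ha : 0 < a) (m : ℕ) (t : ℝ) :
    HasDerivAt (lineFourier (powMul F m) 0) (lineFourier (powMul F (m + 1)) 0 t) t := by
  have h0 : |(0 : ℝ)| < a := by simpa using ha
  have hint (n : ℕ) : Integrable fun ν : ℝ => powMul F n (((0 : ℝ) : ℂ) + ν * I) := by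
    simpa [powMul] using integrable_lineFourier_integrand
      ((continuous_pow n).continuousOn.mul hF.2.1.continuousOn)
      (hF.invSqDecayOn_iterate_deriv_powMul n 0) h0 0
  have hsucc (ν : ℝ) : powMul F (m + 1) (((0 : ℝ) : ℂ) + ν * I) =
      I * ν * powMul F m (((0 : ℝ) : ℂ) + ν * I) := by
    simp only [powMul, Pi.mul_apply, ofReal_zero, zero_add, pow_succ]
    ring
  have hνφ : Integrable fun ν : ℝ => ν * powMul F m (((0 : ℝ) : ℂ) + ν * I) :=
    ((hint (m + 1)).const_mul (-I)).congr (ae_of_all _ fun ν => by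
      dsimp only
      rw [hsucc]
      linear_combination (-(ν : ℂ) * powMul F m (((0 : ℝ) : ℂ) + ν * I)) * I_sq)
  exact (hasDerivAt_integral_mul_cexp (hint m) hνφ t).congr_deriv (by
    simp only [lineFourier, hsucc, mul_assoc])

lemma iteratedDeriv_eq_lineFourier_powMul (hF : StripSchwartz a F Fd) (ha : 0 < a) {g : ℝ → ℂ}
    (hg : ∀ t : ℝ, g t = (1 / (2 * Real.pi) : ℂ) *
      ∫ ν : ℝ, F (I * (ν : ℂ)) * exp (I * (ν : ℂ) * (t : ℂ))) (m : ℕ) :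
    iteratedDeriv m g = fun t => (1 / (2 * Real.pi) : ℂ) * lineFourier (powMul F m) 0 t := by
  induction m with
  | zero =>
    ext t
    simp [hg, lineFourier, powMul, mul_comm I]
  | succ m ih =>
    ext t
    rw [iteratedDeriv_succ, ih]
    exact ((hF.hasDerivAt_lineFourier_powMul ha m t).const_mul _).deriv

lemma contDiff_of_eq_integral (hF : StripSchwartz a F Fd) (ha : 0 < a) {g : ℝ → ℂ}
    (hg : ∀ t : ℝ, g t = (1 / (2 * Real.pi) : ℂ) *
      ∫ ν : ℝ, F (I * (ν : ℂ)) * exp (I * (ν : ℂ) * (t : ℂ))) :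
    ContDiff ℝ (⊤ : ℕ∞) g := by
  refine contDiff_of_differentiable_iteratedDeriv fun m _ t => ?_
  rw [hF.iteratedDeriv_eq_lineFourier_powMul ha hg m]
  exact ((hF.hasDerivAt_lineFourier_powMul ha m t).const_mul _).differentiableAt

lemma weighted_norm_iteratedDeriv_le (hF : StripSchwartz a F Fd) (ha : 0 < a) {g : ℝ → ℂ}
    (hg : ∀ t : ℝ, g t = (1 / (2 * Real.pi) : ℂ) *
      ∫ ν : ℝ, F (I * (ν : ℂ)) * exp (I * (ν : ℂ) * (t : ℂ))) {N m : ℕ} {M : ℝ}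
    (hM : ∀ j ≤ N, ∀ z ∈ Strip a, (1 + ‖z‖) ^ (m + 2) * ‖Fd j z‖ ≤ M) (t : ℝ) :
    (1 + |t|) ^ N * Real.cosh (a * t) * ‖iteratedDeriv m g t‖ ≤
      Real.exp 1 * (4 * (m + 1)) ^ N * M := by
  obtain ⟨σ, hσ, hcosh⟩ := exists_abs_lt_cosh_mul_exp_le ha t
  set B := (2 * ((m : ℝ) + 1)) ^ N * M
  have hbound (k : ℕ) (hk : k ≤ N) (z : ℂ) (hz : z ∈ StripO a) :
      ‖deriv^[k] (powMul F m) z‖ ≤ B * (1 + z.im ^ 2)⁻¹ :=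
    hF.norm_iterate_deriv_powMul_le hM hk hz
  have hdiff : DifferentiableOn ℂ (powMul F m) (StripO a) :=
    (differentiable_pow m).differentiableOn.mul hF.2.1
  set L := lineFourier (powMul F m) σ t
  have hpow (k : ℕ) (hk : k ≤ N) : |t| ^ k * ‖L‖ ≤ B * Real.pi := by
    have hparts := pow_mul_lineFourier hdiff (fun j hj => ⟨B, hbound j (hj.trans hk)⟩) hσ t
    calc |t| ^ k * ‖L‖ = ‖lineFourier (deriv^[k] (powMul F m)) σ t‖ := by
          simpa [norm_mul, norm_pow] using congrArg norm hparts
      _ ≤ B * Real.pi := norm_lineFourier_le (hbound k hk) hσ t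
  have hweight : (1 + |t|) ^ N * ‖L‖ ≤ 2 ^ N * (2 * (B * Real.pi)) :=
    calc (1 + |t|) ^ N * ‖L‖ ≤ 2 ^ (N - 1) * (1 ^ N + |t| ^ N) * ‖L‖ := by
          gcongr; exact add_pow_le zero_le_one (abs_nonneg t) N
      _ = 2 ^ (N - 1) * (|t| ^ 0 * ‖L‖ + |t| ^ N * ‖L‖) := by ring
      _ ≤ 2 ^ N * (2 * (B * Real.pi)) := by
          rw [two_mul]
          gcongr 2 ^ ?_ * (?_ + ?_)
          exacts [one_le_two, Nat.sub_le N 1, hpow 0 (Nat.zero_le N), hpow N le_rfl]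
  have hshift : exp (t * σ) * L = lineFourier (powMul F m) 0 t := by
    simpa using cexp_mul_lineFourier_eq hdiff (hF.invSqDecayOn_iterate_deriv_powMul m 0)
      (hF.invSqDecayOn_iterate_deriv_powMul m 1) hσ (σ' := 0) (by simpa using ha) t
  rw [congrFun (hF.iteratedDeriv_eq_lineFourier_powMul ha hg m) t, ← hshift]
  calc (1 + |t|) ^ N * Real.cosh (a * t) * ‖(1 / (2 * Real.pi) : ℂ) * (exp (t * σ) * L)‖
      = Real.cosh (a * t) * Real.exp (t * σ) * ((1 + |t|) ^ N * ‖L‖) / (2 * Real.pi) := by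
        simp only [norm_mul, ← ofReal_mul, norm_exp_ofReal, one_div, norm_inv, norm_real,
          Real.norm_eq_abs, abs_of_pos Real.pi_pos, norm_ofNat]
        ring
    _ ≤ Real.exp 1 * (2 ^ N * (2 * (B * Real.pi))) / (2 * Real.pi) := by gcongr
    _ = Real.exp 1 * (4 * (m + 1)) ^ N * M := by
        field_simp
        rw [show (4 : ℝ) * (m + 1) = 2 * (2 * (m + 1)) by ring, mul_pow]
        ring

end StripSchwartz

/-- **Continuity of the inverse Fourier transform from `𝓢(S_a)` into `𝓢_a(ℝ)`**
(the contour-shifting part of Lemma 2.2.4 of the paper). For `F ∈ 𝓢(S_a)`, the function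
`g t = (1/2π) ∫ F(iν) e^{iνt} dν` is smooth and lies in `𝓢_a(ℝ)`, and for each `N, m` there
is a constant `C > 0`, depending only on `a, N, m`, such that
`sup_t (1+|t|)^N cosh(at) |g^{(m)}(t)| ≤ C · max_{j ≤ N} sup_{z ∈ S_a} (1+|z|)^{m+2} |F^{(j)}(z)|`. -/
theorem stmt_4 (a : ℝ) (ha : 0 < a) :
    (∀ (F : ℂ → ℂ) (Fd : ℕ → ℂ → ℂ), StripSchwartz a F Fd → ∀ g : ℝ → ℂ,
      (∀ t : ℝ, g t = (1 / (2 * Real.pi) : ℂ) *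
        ∫ ν : ℝ, F (Complex.I * (ν : ℂ)) * Complex.exp (Complex.I * (ν : ℂ) * (t : ℂ))) →
      ContDiff ℝ (⊤ : ℕ∞) g ∧ WSchwartzBdd a g) ∧
    (∀ N m : ℕ, ∃ C > (0 : ℝ), ∀ (F : ℂ → ℂ) (Fd : ℕ → ℂ → ℂ), StripSchwartz a F Fd →
      ∀ g : ℝ → ℂ,
      (∀ t : ℝ, g t = (1 / (2 * Real.pi) : ℂ) *
        ∫ ν : ℝ, F (Complex.I * (ν : ℂ)) * Complex.exp (Complex.I * (ν : ℂ) * (t : ℂ))) →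
      ∀ M : ℝ,
      (∀ j ≤ N, ∀ z ∈ Strip a, (1 + ‖z‖) ^ (m + 2) * ‖Fd j z‖ ≤ M) →
      ∀ t : ℝ,
        (1 + |t|) ^ N * Real.cosh (a * t) * ‖iteratedDeriv m g t‖ ≤ C * M) := by
  refine ⟨fun F Fd hF g hg => ⟨hF.contDiff_of_eq_integral ha hg, fun N k => ?_⟩,
    fun N m => ⟨_, by positivity, fun F Fd hF g hg M hM t =>
      hF.weighted_norm_iteratedDeriv_le ha hg hM t⟩⟩
  obtain ⟨M, hM⟩ := hF.exists_seminorm_bound N (k + 2)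
  exact ⟨_, hF.weighted_norm_iteratedDeriv_le ha hg hM⟩
end

section
/- Let a > 0, let ρ > 0 and s ∈ ℕ, and let p(ν) = (ν+ρ)(ν+ρ+1)⋯(ν+ρ+s−1) (with p ≡ 1 when s = 0). (a) If G ∈ 𝓢(S_a) is even, i.e. G(−ν) = G(ν) for all ν ∈ S_a, then the function F(ν) = p(−ν) G(ν) belongs to 𝓢(S_a) and satisfies the symmetry condition p(−ν) F(−ν) = p(ν) F(ν) for all ν ∈ S_a. (b) Conversely, if F ∈ 𝓢(S_a) satisfies p(−ν) F(−ν) = p(ν) F(ν) for all ν ∈ S_a, then there exists a unique even G ∈ 𝓢(S_a) with F(ν) = p(−ν) G(ν) for all ν ∈ S_a. Hence G ↦ p(−·)G is a bijection between the even functions in 𝓢(S_a) and the functions in 𝓢(S_a) satisfying that symmetry condition. -/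
open MeasureTheory Complex

/-!
Multiplication by `p(-ν)` preserves `𝓢(S_a)` by the Leibniz rule. Conversely, since
`p(ρ + i) ≠ 0`, the symmetry condition forces `F` to vanish at each root `ρ + i` of `p(-·)` that
lies in the strip, so `F` can be divided by the factors `ρ + i - ν` one at a time. For a root `r`
in the strip the quotient is `-∫₀¹ F'(r + t(ν - r)) dt`, whose derivatives (differentiate under
the integral) are continuous up to the boundary; for a root outside the strip the quotient rule
suffices. Away from `r` the Leibniz identity `F⁽ᵏ⁾ = (r - ν) G⁽ᵏ⁾ - k G⁽ᵏ⁻¹⁾` transfers the decay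
of `F` to the quotient `G`. Evenness and uniqueness of `G` hold off the finitely many zeros of
`p(ν) p(-ν)`, hence on the whole strip by continuity.
-/

open Set Filter Topology Interval

lemma strip_eq (a : ℝ) : Strip a = re ⁻¹' Icc (-a) a := by
  ext z; simp [Strip, abs_le]

lemma stripO_eq (a : ℝ) : StripO a = re ⁻¹' Ioo (-a) a := by
  ext z; simp [StripO, abs_lt]

lemma isOpen_stripO (a : ℝ) : IsOpen (StripO a) := by
  rw [stripO_eq]
  exact isOpen_Ioo.preimage continuous_re

lemma stripO_subset_strip (a : ℝ) : StripO a ⊆ Strip a :=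
  fun z hz => le_of_lt (show |z.re| < a from hz)

lemma closure_stripO {a : ℝ} (ha : 0 < a) : closure (StripO a) = Strip a := by
  rw [stripO_eq, closure_preimage_re, closure_Ioo (by linarith), strip_eq]

lemma neg_mem_strip {a : ℝ} {z : ℂ} (hz : z ∈ Strip a) : -z ∈ Strip a := by
  simpa [Strip] using hz

lemma convex_strip (a : ℝ) : Convex ℝ (Strip a) := by
  rw [strip_eq]
  exact (convex_Icc _ _).linear_preimage reLm

lemma convex_stripO (a : ℝ) : Convex ℝ (StripO a) := by
  rw [stripO_eq]
  exact (convex_Ioo _ _).linear_preimage reLm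

lemma add_mul_sub_mem_strip {a : ℝ} {r z : ℂ} (hr : r ∈ Strip a) (hz : z ∈ Strip a) {t : ℝ}
    (ht : t ∈ Icc (0 : ℝ) 1) : r + t * (z - r) ∈ Strip a := by
  simpa [real_smul] using (convex_strip a).add_smul_sub_mem hr hz ht

lemma add_mul_sub_mem_stripO {a : ℝ} (ha : 0 < a) {r z : ℂ} (hr : r ∈ Strip a)
    (hz : z ∈ StripO a) {t : ℝ} (ht : t ∈ Ioc (0 : ℝ) 1) : r + t * (z - r) ∈ StripO a := by
  have hint := (isOpen_stripO a).interior_eq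
  simpa [real_smul, hint] using (convex_stripO a).add_smul_sub_mem_interior'
    (by rwa [closure_stripO ha]) (by rwa [hint]) ht

lemma abs_re_sub_le_norm_sub_of_mem_strip {a : ℝ} {r z : ℂ} (hz : z ∈ Strip a) :
    |r.re| - a ≤ ‖r - z‖ :=
  calc |r.re| - a ≤ |r.re| - |z.re| := sub_le_sub_left hz _
    _ ≤ |(r - z).re| := by rw [sub_re]; exact abs_sub_abs_le_abs_sub _ _
    _ ≤ ‖r - z‖ := abs_re_le_norm _

lemma eqOn_strip_of_eqOn_stripO {a : ℝ} (ha : 0 < a) {f g : ℂ → ℂ}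
    (hf : ContinuousOn f (Strip a)) (hg : ContinuousOn g (Strip a)) (h : EqOn f g (StripO a)) :
    EqOn f g (Strip a) :=
  h.of_subset_closure hf hg (stripO_subset_strip a) (closure_stripO ha).ge

lemma eqOn_strip_of_eqOn_diff_finite {a : ℝ} (ha : 0 < a) {Z : Set ℂ} (hZ : Z.Finite)
    {f g : ℂ → ℂ} (hf : ContinuousOn f (Strip a)) (hg : ContinuousOn g (Strip a))
    (h : EqOn f g (Strip a \ Z)) : EqOn f g (Strip a) := by
  refine eqOn_strip_of_eqOn_stripO ha hf hg ?_
  have hdense : StripO a ⊆ closure (StripO a ∩ Zᶜ) :=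
    (hZ.countable.dense_compl ℂ).open_subset_closure_inter (isOpen_stripO a)
  have hsub : StripO a ∩ Zᶜ ⊆ Strip a \ Z := fun z hz => ⟨stripO_subset_strip a hz.1, hz.2⟩
  exact (h.mono hsub).of_subset_closure
    (hf.mono (stripO_subset_strip a)) (hg.mono (stripO_subset_strip a)) inter_subset_left hdense

lemma eqOn_strip_of_mul_eq {a : ℝ} (ha : 0 < a) {q : ℂ → ℂ} (hq : {ν | q ν = 0}.Finite)
    {f g : ℂ → ℂ} (hf : ContinuousOn f (Strip a)) (hg : ContinuousOn g (Strip a))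
    (h : ∀ ν ∈ Strip a, q ν * f ν = q ν * g ν) : EqOn f g (Strip a) :=
  eqOn_strip_of_eqOn_diff_finite ha hq hf hg fun ν hν => mul_left_cancel₀ hν.2 (h ν hν.1)

lemma finite_setOf_prod_add_eq_zero (ρ : ℝ) (s : ℕ) :
    {ν : ℂ | ∏ i ∈ Finset.range s, (ν + ρ + i) = 0}.Finite :=
  ((Finset.range s).finite_toSet.image fun i : ℕ => -((ρ : ℂ) + i)).subset fun ν h => by
    obtain ⟨i, hi, h⟩ := Finset.prod_eq_zero_iff.1 h
    exact ⟨i, hi, by linear_combination -h⟩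

lemma prod_add_ne_zero {ρ : ℝ} (hρ : 0 < ρ) {ν : ℂ} (hν : 0 ≤ ν.re) (s : ℕ) :
    ∏ i ∈ Finset.range s, (ν + ρ + i) ≠ 0 :=
  Finset.prod_ne_zero_iff.2 fun i _ h => by
    have := congrArg re h
    simp only [add_re, ofReal_re, natCast_re, zero_re] at this
    linarith [i.cast_nonneg (α := ℝ)]

def WeightBounded (S : Set ℂ) (N : ℕ) (f : ℂ → ℂ) : Prop :=
  ∃ C : ℝ, ∀ z ∈ S, (1 + ‖z‖) ^ N * ‖f z‖ ≤ C

namespace WeightBounded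

variable {S : Set ℂ} {N : ℕ} {f g : ℂ → ℂ}

lemma congr (hf : WeightBounded S N f) (hfg : EqOn f g S) : WeightBounded S N g := by
  obtain ⟨C, hC⟩ := hf
  exact ⟨C, fun z hz => hfg hz ▸ hC z hz⟩

lemma add (hf : WeightBounded S N f) (hg : WeightBounded S N g) :
    WeightBounded S N (fun z => f z + g z) := by
  obtain ⟨C, hC⟩ := hf
  obtain ⟨D, hD⟩ := hg
  refine ⟨C + D, fun z hz => ?_⟩
  calc (1 + ‖z‖) ^ N * ‖f z + g z‖ ≤ (1 + ‖z‖) ^ N * (‖f z‖ + ‖g z‖) := by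
        gcongr; exact norm_add_le _ _
    _ ≤ C + D := by rw [mul_add]; exact add_le_add (hC z hz) (hD z hz)

lemma const_mul (hf : WeightBounded S N f) (c : ℂ) : WeightBounded S N (fun z => c * f z) := by
  obtain ⟨C, hC⟩ := hf
  refine ⟨‖c‖ * C, fun z hz => ?_⟩
  rw [norm_mul, mul_left_comm]
  exact mul_le_mul_of_nonneg_left (hC z hz) (norm_nonneg c)

lemma sub (hf : WeightBounded S N f) (hg : WeightBounded S N g) :
    WeightBounded S N (fun z => f z - g z) := by
  simpa [sub_eq_add_neg] using hf.add (hg.const_mul (-1))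

lemma exists_norm_le (hf : WeightBounded S 0 f) : ∃ C : ℝ, ∀ z ∈ S, ‖f z‖ ≤ C := by
  simpa [WeightBounded] using hf

lemma sub_mul (hf : WeightBounded S (N + 1) f) (r : ℂ) :
    WeightBounded S N (fun z => (r - z) * f z) := by
  obtain ⟨C, hC⟩ := hf
  refine ⟨(1 + ‖r‖) * C, fun z hz => ?_⟩
  have hrz : ‖r - z‖ ≤ (1 + ‖r‖) * (1 + ‖z‖) := by
    nlinarith [norm_sub_le r z, norm_nonneg r, norm_nonneg z]
  calc (1 + ‖z‖) ^ N * ‖(r - z) * f z‖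
      ≤ (1 + ‖z‖) ^ N * ((1 + ‖r‖) * (1 + ‖z‖) * ‖f z‖) := by rw [norm_mul]; gcongr
    _ = (1 + ‖r‖) * ((1 + ‖z‖) ^ (N + 1) * ‖f z‖) := by ring
    _ ≤ (1 + ‖r‖) * C := by gcongr; exact hC z hz

lemma of_sub_mul {r : ℂ} {δ C₀ : ℝ} (hδ : 0 < δ)
    (hnear : ∀ z ∈ S, ‖r - z‖ < δ → ‖g z‖ ≤ C₀)
    (h : WeightBounded S N (fun z => (r - z) * g z)) : WeightBounded S N g := by
  obtain ⟨C, hC⟩ := h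
  refine ⟨max (C / δ) ((1 + ‖r‖ + δ) ^ N * C₀), fun z hz => ?_⟩
  rcases lt_or_ge ‖r - z‖ δ with hlt | hge
  · have hzr : ‖z‖ ≤ ‖r‖ + δ := by
      linarith [norm_sub_norm_le z r, norm_sub_rev z r]
    refine le_max_of_le_right (mul_le_mul ?_ (hnear z hz hlt) (norm_nonneg _) (by positivity))
    exact pow_le_pow_left₀ (by positivity) (by linarith) N
  · refine le_max_of_le_left ((le_div_iff₀ hδ).2 ?_)
    calc (1 + ‖z‖) ^ N * ‖g z‖ * δ ≤ (1 + ‖z‖) ^ N * ‖g z‖ * ‖r - z‖ := by gcongr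
      _ = (1 + ‖z‖) ^ N * ‖(r - z) * g z‖ := by rw [norm_mul]; ring
      _ ≤ C := hC z hz

end WeightBounded

lemma eqOn_iteratedDeriv_of_hasDerivAt {𝕜 E : Type*} [NontriviallyNormedField 𝕜]
    [NormedAddCommGroup E] [NormedSpace 𝕜 E] {U : Set 𝕜} (hU : IsOpen U) {D : ℕ → 𝕜 → E}
    (hD : ∀ k, ∀ z ∈ U, HasDerivAt (D k) (D (k + 1) z) z) (k : ℕ) :
    EqOn (D k) (iteratedDeriv k (D 0)) U := by
  induction k with
  | zero => intro z _; rfl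
  | succ k ih =>
    intro z hz
    rw [iteratedDeriv_succ, ← (hD k z hz).deriv]
    exact (eventuallyEq_of_mem (hU.mem_nhds hz) ih).deriv_eq

/-- The derivatives of `ν ↦ (r - ν) * G 0 ν` by the Leibniz rule, if `G k` is the `k`-th
derivative of `G 0`; at `k = 0` the truncated `k - 1` is harmless, its coefficient being `0`. -/
def linearMulSeq (r : ℂ) (G : ℕ → ℂ → ℂ) (k : ℕ) (ν : ℂ) : ℂ :=
  (r - ν) * G k ν - k * G (k - 1) ν

lemma hasDerivAt_linearMulSeq {r z : ℂ} {G : ℕ → ℂ → ℂ}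
    (hG : ∀ k, HasDerivAt (G k) (G (k + 1) z) z) (k : ℕ) :
    HasDerivAt (linearMulSeq r G k) (linearMulSeq r G (k + 1) z) z := by
  have hlin : HasDerivAt (fun ν : ℂ => r - ν) (-1) z := by
    simpa using (hasDerivAt_id z).const_sub r
  have hlow : HasDerivAt (fun ν => (k : ℂ) * G (k - 1) ν) (k * G k z) z := by
    cases k with
    | zero => simpa using hasDerivAt_const z (0 : ℂ)
    | succ k => simpa using (hG k).const_mul ((k : ℂ) + 1)
  refine ((hlin.fun_mul (hG k)).fun_sub hlow).congr_deriv ?_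
  simp only [linearMulSeq, add_tsub_cancel_right]
  push_cast
  ring

lemma continuousOn_linearMulSeq {S : Set ℂ} {G : ℕ → ℂ → ℂ} (hG : ∀ k, ContinuousOn (G k) S)
    (r : ℂ) (k : ℕ) : ContinuousOn (linearMulSeq r G k) S :=
  ((continuousOn_const.sub continuousOn_id).mul (hG k)).sub (continuousOn_const.mul (hG (k - 1)))

namespace StripSchwartz

variable {a : ℝ} {F : ℂ → ℂ} {Fd : ℕ → ℂ → ℂ}

protected lemma continuousOn (hF : StripSchwartz a F Fd) : ContinuousOn F (Strip a) := hF.1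

lemma seq_zero_eq (hF : StripSchwartz a F Fd) {z : ℂ} (hz : z ∈ Strip a) : Fd 0 z = F z :=
  hF.2.2.1 z hz

lemma seq_eq_iteratedDeriv (hF : StripSchwartz a F Fd) (k : ℕ) {z : ℂ} (hz : z ∈ StripO a) :
    Fd k z = iteratedDeriv k F z :=
  hF.2.2.2.1 k z hz

lemma continuousOn_seq (hF : StripSchwartz a F Fd) (k : ℕ) : ContinuousOn (Fd k) (Strip a) :=
  hF.2.2.2.2.1 k

lemma weightBounded (hF : StripSchwartz a F Fd) (N k : ℕ) : WeightBounded (Strip a) N (Fd k) :=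
  hF.2.2.2.2.2 N k

lemma hasDerivAt (hF : StripSchwartz a F Fd) (k : ℕ) {z : ℂ} (hz : z ∈ StripO a) :
    HasDerivAt (Fd k) (Fd (k + 1) z) z := by
  obtain ⟨-, hdiff, -, hiter, -, -⟩ := hF
  have han : AnalyticAt ℂ (iteratedDeriv k F) z := by
    rw [iteratedDeriv_eq_iterate]
    exact (hdiff.analyticOnNhd (isOpen_stripO a)).iterated_deriv k z hz
  have h := han.differentiableAt.hasDerivAt
  rw [← iteratedDeriv_succ, ← hiter (k + 1) z hz] at h
  exact h.congr_of_eventuallyEq (eventuallyEq_of_mem ((isOpen_stripO a).mem_nhds hz) (hiter k))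

lemma of_hasDerivAt {G : ℂ → ℂ} (h0 : EqOn (Fd 0) G (Strip a))
    (hD : ∀ k, ∀ z ∈ StripO a, HasDerivAt (Fd k) (Fd (k + 1) z) z)
    (hcont : ∀ k, ContinuousOn (Fd k) (Strip a))
    (hbound : ∀ N k, WeightBounded (Strip a) N (Fd k)) :
    StripSchwartz a G Fd := by
  have hloc : ∀ z ∈ StripO a, Fd 0 =ᶠ[𝓝 z] G := fun z hz =>
    eventuallyEq_of_mem ((isOpen_stripO a).mem_nhds hz) fun w hw => h0 (stripO_subset_strip a hw)
  refine ⟨(hcont 0).congr fun z hz => (h0 hz).symm, fun z hz => ?_, h0, fun k z hz => ?_,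
    hcont, hbound⟩
  · exact ((hD 0 z hz).congr_of_eventuallyEq (hloc z hz).symm).differentiableAt
      |>.differentiableWithinAt
  · rw [eqOn_iteratedDeriv_of_hasDerivAt (isOpen_stripO a) hD k hz]
    exact ((hloc z hz).iteratedDeriv k).eq_of_nhds

lemma sub_mul (hF : StripSchwartz a F Fd) (r : ℂ) :
    StripSchwartz a (fun ν => (r - ν) * F ν) (linearMulSeq r Fd) :=
  of_hasDerivAt (fun z hz => by simp [linearMulSeq, hF.seq_zero_eq hz])
    (fun k z hz => hasDerivAt_linearMulSeq (fun j => hF.hasDerivAt j hz) k)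
    (continuousOn_linearMulSeq hF.continuousOn_seq r)
    fun N k => ((hF.weightBounded (N + 1) k).sub_mul r).sub
      ((hF.weightBounded N (k - 1)).const_mul k)

lemma prod_sub_mul (hF : StripSchwartz a F Fd) (c : ℕ → ℂ) (m : ℕ) :
    ∃ Gd, StripSchwartz a (fun ν => (∏ i ∈ Finset.range m, (c i - ν)) * F ν) Gd := by
  induction m with
  | zero => simpa using ⟨Fd, hF⟩
  | succ m ih =>
    obtain ⟨Gd, hG⟩ := ih
    have hprod : (fun ν => (∏ i ∈ Finset.range (m + 1), (c i - ν)) * F ν) =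
        fun ν => (c m - ν) * ((∏ i ∈ Finset.range m, (c i - ν)) * F ν) := by
      ext ν
      rw [Finset.prod_range_succ]
      ring
    exact hprod ▸ ⟨_, hG.sub_mul (c m)⟩

lemma of_eq_sub_mul (ha : 0 < a) (hF : StripSchwartz a F Fd) {G : ℕ → ℂ → ℂ} {r : ℂ} {δ : ℝ}
    (hδ : 0 < δ) (hD : ∀ k, ∀ z ∈ StripO a, HasDerivAt (G k) (G (k + 1) z) z)
    (hcont : ∀ k, ContinuousOn (G k) (Strip a))
    (hnear : ∀ k, ∃ C : ℝ, ∀ z ∈ Strip a, ‖r - z‖ < δ → ‖G k z‖ ≤ C)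
    (hFG : ∀ z ∈ Strip a, F z = (r - z) * G 0 z) :
    StripSchwartz a (G 0) G := by
  -- `Fd` and `linearMulSeq r G` are both derivative chains of `F`; the resulting identity
  -- `(r - z) * G k z = Fd k z + k * G (k - 1) z` bounds `G k` away from `r`.
  have hseq : ∀ k, EqOn (Fd k) (linearMulSeq r G k) (Strip a) := by
    intro k
    refine eqOn_strip_of_eqOn_stripO ha (hF.continuousOn_seq k)
      (continuousOn_linearMulSeq hcont r k) fun z hz => ?_
    have hloc : linearMulSeq r G 0 =ᶠ[𝓝 z] F :=
      eventuallyEq_of_mem ((isOpen_stripO a).mem_nhds hz) fun w hw => by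
        simp [linearMulSeq, hFG w (stripO_subset_strip a hw)]
    rw [hF.seq_eq_iteratedDeriv k hz, eqOn_iteratedDeriv_of_hasDerivAt (isOpen_stripO a)
      (fun j w hw => hasDerivAt_linearMulSeq (fun i => hD i w hw) j) k hz,
      (hloc.iteratedDeriv k).eq_of_nhds]
  have hstep : ∀ (N k : ℕ), WeightBounded (Strip a) N (fun z => (k : ℂ) * G (k - 1) z) →
      WeightBounded (Strip a) N (G k) := fun N k hprev => by
    obtain ⟨C, hC⟩ := hnear k
    refine .of_sub_mul hδ hC (((hF.weightBounded N k).add hprev).congr fun z hz => ?_)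
    simp [hseq k hz, linearMulSeq]
  refine of_hasDerivAt (fun _ _ => rfl) hD hcont fun N k => ?_
  induction k with
  | zero => exact hstep N 0 ⟨0, by simp⟩
  | succ k ih => exact hstep N (k + 1) (by simpa using ih.const_mul ((k : ℂ) + 1))

end StripSchwartz

lemma norm_segment_integrand_le {a : ℝ} {Fd : ℕ → ℂ → ℂ} {r ν : ℂ} {C : ℝ} {k m : ℕ}
    (hC : ∀ w ∈ Strip a, ‖Fd m w‖ ≤ C) (hr : r ∈ Strip a) (hν : ν ∈ Strip a) {t : ℝ}
    (ht : t ∈ Ι (0 : ℝ) 1) : ‖(t : ℂ) ^ k * Fd m (r + t * (ν - r))‖ ≤ C := by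
  rw [uIoc_of_le zero_le_one] at ht
  rw [norm_mul, norm_pow, norm_real, Real.norm_of_nonneg ht.1.le]
  calc t ^ k * ‖Fd m (r + t * (ν - r))‖ ≤ 1 * C :=
        mul_le_mul (pow_le_one₀ ht.1.le ht.2)
          (hC _ (add_mul_sub_mem_strip hr hν (Ioc_subset_Icc_self ht))) (norm_nonneg _) zero_le_one
    _ = C := one_mul C

/-- When `F r = 0`, the `k`-th derivative of `F ν / (r - ν)`, in a form that stays continuous at
`r` even when `r` lies on the boundary of the strip. -/
noncomputable def integralQuot (Fd : ℕ → ℂ → ℂ) (r : ℂ) (k : ℕ) (ν : ℂ) : ℂ :=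
  -∫ t in (0 : ℝ)..1, (t : ℂ) ^ k * Fd (k + 1) (r + t * (ν - r))

noncomputable def recursiveQuot (Fd : ℕ → ℂ → ℂ) (r : ℂ) : ℕ → ℂ → ℂ
  | 0 => fun ν => Fd 0 ν / (r - ν)
  | k + 1 => fun ν => (Fd (k + 1) ν + ((k : ℂ) + 1) * recursiveQuot Fd r k ν) / (r - ν)

namespace StripSchwartz

variable {a : ℝ} {F : ℂ → ℂ} {Fd : ℕ → ℂ → ℂ} {r : ℂ}

lemma continuousOn_seq_segment (hF : StripSchwartz a F Fd) (hr : r ∈ Strip a) {ν : ℂ}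
    (hν : ν ∈ Strip a) (m : ℕ) :
    ContinuousOn (fun t : ℝ => Fd m (r + t * (ν - r))) (Icc 0 1) :=
  (hF.continuousOn_seq m).comp (by fun_prop) fun _ ht => add_mul_sub_mem_strip hr hν ht

lemma continuousOn_segment_integrand (hF : StripSchwartz a F Fd) (hr : r ∈ Strip a) {ν : ℂ}
    (hν : ν ∈ Strip a) (k m : ℕ) :
    ContinuousOn (fun t : ℝ => (t : ℂ) ^ k * Fd m (r + t * (ν - r))) (Icc 0 1) :=
  (continuous_ofReal.pow k).continuousOn.mul (hF.continuousOn_seq_segment hr hν m)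

lemma aestronglyMeasurable_segment_integrand (hF : StripSchwartz a F Fd) (hr : r ∈ Strip a) {ν : ℂ}
    (hν : ν ∈ Strip a) (k m : ℕ) :
    AEStronglyMeasurable (fun t : ℝ => (t : ℂ) ^ k * Fd m (r + t * (ν - r)))
      (volume.restrict (Ι 0 1)) := by
  rw [uIoc_of_le zero_le_one]
  exact ((hF.continuousOn_segment_integrand hr hν k m).mono Ioc_subset_Icc_self)
    |>.aestronglyMeasurable measurableSet_Ioc

lemma exists_norm_integralQuot_le (hF : StripSchwartz a F Fd) (hr : r ∈ Strip a) (k : ℕ) :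
    ∃ C : ℝ, ∀ z ∈ Strip a, ‖integralQuot Fd r k z‖ ≤ C := by
  obtain ⟨C, hC⟩ := (hF.weightBounded 0 (k + 1)).exists_norm_le
  refine ⟨C, fun z hz => ?_⟩
  rw [integralQuot, norm_neg]
  simpa using intervalIntegral.norm_integral_le_of_norm_le_const
    fun t ht => norm_segment_integrand_le hC hr hz ht

lemma continuousOn_integralQuot (hF : StripSchwartz a F Fd) (hr : r ∈ Strip a) (k : ℕ) :
    ContinuousOn (integralQuot Fd r k) (Strip a) := by
  intro x hx
  obtain ⟨C, hC⟩ := (hF.weightBounded 0 (k + 1)).exists_norm_le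
  refine (intervalIntegral.continuousWithinAt_of_dominated_interval (bound := fun _ => C)
    (eventually_nhdsWithin_of_forall fun ν hν =>
      hF.aestronglyMeasurable_segment_integrand hr hν k (k + 1))
    (eventually_nhdsWithin_of_forall fun ν hν =>
      ae_of_all _ fun t ht => norm_segment_integrand_le hC hr hν ht)
    intervalIntegrable_const (ae_of_all _ fun t ht => ?_)).neg
  rw [uIoc_of_le zero_le_one] at ht
  have hseg : ∀ ν ∈ Strip a, r + t * (ν - r) ∈ Strip a := fun ν hν =>
    add_mul_sub_mem_strip hr hν (Ioc_subset_Icc_self ht)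
  exact continuousWithinAt_const.mul <|
    (hF.continuousOn_seq (k + 1)).comp (by fun_prop) hseg x hx

lemma hasDerivAt_integralQuot (ha : 0 < a) (hF : StripSchwartz a F Fd) (hr : r ∈ Strip a)
    (k : ℕ) {z : ℂ} (hz : z ∈ StripO a) :
    HasDerivAt (integralQuot Fd r k) (integralQuot Fd r (k + 1) z) z := by
  obtain ⟨C, hC⟩ := (hF.weightBounded 0 (k + 2)).exists_norm_le
  have hzS := stripO_subset_strip a hz
  have hnhds := (isOpen_stripO a).mem_nhds hz
  refine (intervalIntegral.hasDerivAt_integral_of_dominated_loc_of_deriv_le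
    (F := fun ν t => (t : ℂ) ^ k * Fd (k + 1) (r + t * (ν - r)))
    (F' := fun ν t => (t : ℂ) ^ (k + 1) * Fd (k + 2) (r + t * (ν - r)))
    (bound := fun _ => C) hnhds
    (eventually_of_mem hnhds fun ν hν =>
      hF.aestronglyMeasurable_segment_integrand hr (stripO_subset_strip a hν) k (k + 1))
    ((hF.continuousOn_segment_integrand hr hzS k (k + 1)).intervalIntegrable_of_Icc zero_le_one)
    (hF.aestronglyMeasurable_segment_integrand hr hzS (k + 1) (k + 2))
    (ae_of_all _ fun t ht ν hν => norm_segment_integrand_le hC hr (stripO_subset_strip a hν) ht)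
    intervalIntegrable_const (ae_of_all _ fun t ht ν hν => ?_)).2.neg
  rw [uIoc_of_le zero_le_one] at ht
  have hseg : HasDerivAt (fun ν : ℂ => r + t * (ν - r)) t ν := by
    simpa using (((hasDerivAt_id ν).sub_const r).const_mul (t : ℂ)).const_add r
  refine (((hF.hasDerivAt (k + 1) (add_mul_sub_mem_stripO ha hr hν ht)).comp ν hseg).const_mul
    ((t : ℂ) ^ k)).congr_deriv ?_
  ring

lemma eq_sub_mul_integralQuot (ha : 0 < a) (hF : StripSchwartz a F Fd) (hr : r ∈ Strip a)
    (hFr : F r = 0) : ∀ z ∈ Strip a, F z = (r - z) * integralQuot Fd r 0 z := by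
  refine eqOn_strip_of_eqOn_stripO ha hF.continuousOn
    ((continuousOn_const.sub continuousOn_id).mul (hF.continuousOn_integralQuot hr 0))
    fun ν hν => ?_
  have hνS := stripO_subset_strip a hν
  have hderiv : ∀ t ∈ Ioo (0 : ℝ) 1, HasDerivAt (fun t : ℝ => Fd 0 (r + t * (ν - r)))
      (Fd 1 (r + t * (ν - r)) * (ν - r)) t := fun t ht => by
    have hseg : HasDerivAt (fun t : ℝ => r + t * (ν - r)) (ν - r) t := by
      simpa using ((ofRealCLM.hasDerivAt (x := t)).mul_const (ν - r)).const_add r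
    exact (hF.hasDerivAt 0 (add_mul_sub_mem_stripO ha hr hν ⟨ht.1, ht.2.le⟩)).comp t hseg
  have hftc := intervalIntegral.integral_eq_sub_of_hasDerivAt_of_le zero_le_one
    (hF.continuousOn_seq_segment hr hνS 0) hderiv
    (((hF.continuousOn_seq_segment hr hνS 1).mul continuousOn_const).intervalIntegrable_of_Icc
      zero_le_one)
  rw [intervalIntegral.integral_mul_const] at hftc
  simp only [ofReal_zero, ofReal_one, zero_mul, add_zero, one_mul, add_sub_cancel,
    hF.seq_zero_eq hr, hF.seq_zero_eq hνS, hFr, sub_zero] at hftc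
  rw [← hftc, integralQuot]
  simp only [pow_zero, one_mul, zero_add]
  ring

lemma continuousOn_recursiveQuot (hF : StripSchwartz a F Fd) (hne : ∀ z ∈ Strip a, r - z ≠ 0)
    (k : ℕ) : ContinuousOn (recursiveQuot Fd r k) (Strip a) := by
  have hlin : ContinuousOn (fun ν : ℂ => r - ν) (Strip a) := continuousOn_const.sub continuousOn_id
  induction k with
  | zero => exact (hF.continuousOn_seq 0).div hlin hne
  | succ k ih => exact ((hF.continuousOn_seq (k + 1)).add (continuousOn_const.mul ih)).div hlin hne

lemma hasDerivAt_recursiveQuot (hF : StripSchwartz a F Fd) {z : ℂ} (hz : z ∈ StripO a)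
    (hrz : r - z ≠ 0) (k : ℕ) :
    HasDerivAt (recursiveQuot Fd r k) (recursiveQuot Fd r (k + 1) z) z := by
  have hlin : HasDerivAt (fun ν : ℂ => r - ν) (-1) z := by
    simpa using (hasDerivAt_id z).const_sub r
  induction k with
  | zero =>
    refine ((hF.hasDerivAt 0 hz).div hlin hrz).congr_deriv ?_
    simp only [recursiveQuot]
    field_simp
    ring
  | succ k ih =>
    refine (((hF.hasDerivAt (k + 1) hz).fun_add (ih.const_mul ((k : ℂ) + 1))).div hlin hrz)
      |>.congr_deriv ?_
    simp only [recursiveQuot]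
    push_cast
    field_simp
    ring

lemma exists_eq_sub_mul (ha : 0 < a) (hF : StripSchwartz a F Fd) (r : ℂ)
    (hFr : r ∈ Strip a → F r = 0) :
    ∃ G Gd, StripSchwartz a G Gd ∧ ∀ z ∈ Strip a, F z = (r - z) * G z := by
  by_cases hr : r ∈ Strip a
  · have hFG := hF.eq_sub_mul_integralQuot ha hr (hFr hr)
    refine ⟨_, _, hF.of_eq_sub_mul ha one_pos (fun k z hz => hF.hasDerivAt_integralQuot ha hr k hz)
      (hF.continuousOn_integralQuot hr) (fun k => ?_) hFG, hFG⟩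
    obtain ⟨C, hC⟩ := hF.exists_norm_integralQuot_le hr k
    exact ⟨C, fun z hz _ => hC z hz⟩
  · have hδ : 0 < |r.re| - a := by
      have : ¬|r.re| ≤ a := hr
      linarith
    have hfar : ∀ z ∈ Strip a, |r.re| - a ≤ ‖r - z‖ := fun z hz =>
      abs_re_sub_le_norm_sub_of_mem_strip hz
    have hne : ∀ z ∈ Strip a, r - z ≠ 0 := fun z hz h => by
      have := hfar z hz
      rw [h, norm_zero] at this
      linarith
    have hFG : ∀ z ∈ Strip a, F z = (r - z) * recursiveQuot Fd r 0 z := fun z hz => by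
      rw [← hF.seq_zero_eq hz]
      exact (mul_div_cancel₀ _ (hne z hz)).symm
    refine ⟨_, _, hF.of_eq_sub_mul ha hδ
      (fun k z hz => hF.hasDerivAt_recursiveQuot hz (hne z (stripO_subset_strip a hz)) k)
      (hF.continuousOn_recursiveQuot hne) (fun k => ⟨0, fun z hz h => ?_⟩) hFG, hFG⟩
    exact absurd (hfar z hz) (not_le.2 h)

lemma exists_eq_prod_sub_mul (ha : 0 < a) (hF : StripSchwartz a F Fd) {c : ℕ → ℂ}
    (hc : Function.Injective c) (s : ℕ) (hvan : ∀ i < s, c i ∈ Strip a → F (c i) = 0) :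
    ∃ G Gd, StripSchwartz a G Gd ∧
      ∀ z ∈ Strip a, F z = (∏ i ∈ Finset.range s, (c i - z)) * G z := by
  induction s with
  | zero => exact ⟨F, Fd, hF, fun z _ => by simp⟩
  | succ s ih =>
    obtain ⟨G, Gd, hG, hFG⟩ := ih fun i hi => hvan i (by omega)
    have hGs : c s ∈ Strip a → G (c s) = 0 := fun hs => by
      have h := hFG _ hs
      rw [hvan s (by omega) hs, eq_comm, mul_eq_zero] at h
      refine h.resolve_left (Finset.prod_ne_zero_iff.2 fun i hi => sub_ne_zero.2 (hc.ne ?_))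
      simp only [Finset.mem_range] at hi
      omega
    obtain ⟨H, Hd, hH, hGH⟩ := hG.exists_eq_sub_mul ha (c s) hGs
    refine ⟨H, Hd, hH, fun z hz => ?_⟩
    rw [hFG z hz, hGH z hz, Finset.prod_range_succ]
    ring

end StripSchwartz

/-- **Scalar form of Lemma 2.2.9 of the paper.** Let
`p(ν) = (ν+ρ)(ν+ρ+1)⋯(ν+ρ+s−1)` (with `p ≡ 1` if `s = 0`).
(a) If `G ∈ 𝓢(S_a)` is even, then `F = p(−·) G` is in `𝓢(S_a)` and satisfies the symmetry
condition `p(−ν) F(−ν) = p(ν) F(ν)` on `S_a`.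
(b) Conversely, any `F ∈ 𝓢(S_a)` satisfying this symmetry condition is of the form
`F = p(−·) G` for a unique even `G ∈ 𝓢(S_a)`; hence `G ↦ p(−·) G` is a bijection between
even strip-Schwartz functions and those satisfying the symmetry condition. -/
theorem stmt_10 (a ρ : ℝ) (ha : 0 < a) (hρ : 0 < ρ) (s : ℕ)
    (p : ℂ → ℂ) (hp : ∀ ν : ℂ, p ν = ∏ i ∈ Finset.range s, (ν + (ρ : ℂ) + (i : ℂ))) :
    (∀ (G : ℂ → ℂ) (Gd : ℕ → ℂ → ℂ), StripSchwartz a G Gd →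
      (∀ ν ∈ Strip a, G (-ν) = G ν) →
      (∃ Fd : ℕ → ℂ → ℂ, StripSchwartz a (fun ν : ℂ => p (-ν) * G ν) Fd) ∧
      (∀ ν ∈ Strip a, p (-ν) * (p ν * G (-ν)) = p ν * (p (-ν) * G ν))) ∧
    (∀ (F : ℂ → ℂ) (Fd : ℕ → ℂ → ℂ), StripSchwartz a F Fd →
      (∀ ν ∈ Strip a, p (-ν) * F (-ν) = p ν * F ν) →
      ∃ (G : ℂ → ℂ) (Gd : ℕ → ℂ → ℂ), StripSchwartz a G Gd ∧
        (∀ ν ∈ Strip a, G (-ν) = G ν) ∧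
        (∀ ν ∈ Strip a, F ν = p (-ν) * G ν) ∧
        (∀ G' : ℂ → ℂ, ContinuousOn G' (Strip a) →
          (∀ ν ∈ Strip a, F ν = p (-ν) * G' ν) →
          ∀ ν ∈ Strip a, G' ν = G ν)) := by
  set c : ℕ → ℂ := fun i => ρ + i
  have hp_neg : ∀ ν, p (-ν) = ∏ i ∈ Finset.range s, (c i - ν) := fun ν => by
    rw [hp]
    exact Finset.prod_congr rfl fun i _ => by ring
  have hzeros : {ν | p ν = 0}.Finite := by
    simpa only [hp] using finite_setOf_prod_add_eq_zero ρ s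
  have hzeros_neg : {ν | p (-ν) = 0}.Finite := hzeros.preimage neg_injective.injOn
  refine ⟨fun G Gd hG heven => ⟨?_, fun ν hν => by rw [heven ν hν]; ring⟩, fun F Fd hF hsym => ?_⟩
  · simpa only [hp_neg] using hG.prod_sub_mul c s
  have hvan : ∀ i < s, c i ∈ Strip a → F (c i) = 0 := fun i hi hci => by
    have h := hsym _ hci
    rw [hp_neg, Finset.prod_eq_zero (Finset.mem_range.2 hi) (sub_self _), zero_mul, eq_comm,
      mul_eq_zero, hp] at h
    exact h.resolve_left (prod_add_ne_zero hρ (by simp [c]; positivity) s)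
  obtain ⟨G, Gd, hG, hFG⟩ := hF.exists_eq_prod_sub_mul ha (fun i j h => by simpa [c] using h) s hvan
  simp only [← hp_neg] at hFG
  refine ⟨G, Gd, hG, fun ν hν => ?_, hFG, fun G' hG' hFG' => eqOn_strip_of_mul_eq ha hzeros_neg
    hG' hG.continuousOn fun ν hν => by rw [← hFG' ν hν, hFG ν hν]⟩
  refine eqOn_strip_of_mul_eq ha (q := fun ν => p (-ν) * p ν)
    ((hzeros_neg.union hzeros).subset fun _ => mul_eq_zero.1)
    (hG.continuousOn.comp continuous_neg.continuousOn fun _ => neg_mem_strip) hG.continuousOn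
    (fun z hz => ?_) hν
  have h := hsym z hz
  rw [hFG z hz, hFG (-z) (neg_mem_strip hz), neg_neg] at h
  show p (-z) * p z * G (-z) = p (-z) * p z * G z
  linear_combination h
end
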